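/- arXiv:2002.02022 — 4 statements merged into one kernel-verified Lean document; each statement's English description precedes it below -/
import Mathlib

section
/- Suppose c satisfies (Reg) and (Twist) and μ is absolutely continuous. Let ψ₁, ψ₂ ∈ ℝᴺ be optimal dual vectors for ν_{λ₁} and ν_{λ₂} respectively, i.e. G(ψ₁) = λ₁ and G(ψ₂) = λ₂. Then Σ_{i=1}^N μ(Lag_i(ψ₁) Δ Lag_i(ψ₂)) ≤ 4N‖λ₁ − λ₂‖₁, where ‖·‖₁ is the ℓ¹ norm on ℝᴺ. -/
open MeasureTheory Metric Set Filter Bornology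
open scoped RealInnerProductSpace ENNReal NNReal Topology symmDiff

noncomputable section

/-- Euclidean `n`-space. -/
abbrev Euc (n : ℕ) : Type := EuclideanSpace ℝ (Fin n)

/-- The `c^*`-transform `ψ^{c^*}(x) = max_i (-c(x,y_i) - ψ^i)` of a dual vector `ψ`. -/
def cStar {n N : ℕ} (c : Euc n → Fin N → ℝ) (ψ : Fin N → ℝ) (x : Euc n) : ℝ :=
  ⨆ i, (-(c x i) - ψ i)

/-- The `i`-th Laguerre cell associated to the dual vector `ψ`. -/
def Lag {n N : ℕ} (X : Set (Euc n)) (c : Euc n → Fin N → ℝ) (ψ : Fin N → ℝ) (i : Fin N) :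
    Set (Euc n) :=
  {x ∈ X | -(c x i) - ψ i = cStar c ψ x}

/-- The map `G(ψ)^i = μ(Lag_i(ψ))`. -/
def Gmap {n N : ℕ} (μ : Measure (Euc n)) (X : Set (Euc n)) (c : Euc n → Fin N → ℝ)
    (ψ : Fin N → ℝ) (i : Fin N) : ℝ :=
  (μ (Lag X c ψ i)).toReal

/-- Condition (Reg): each `c(·, y_i)` is `C²`. -/
def Reg {n N : ℕ} (c : Euc n → Fin N → ℝ) : Prop :=
  ∀ i, ContDiff ℝ 2 fun x => c x i

/-- Condition (Twist): the gradients `∇_x c(x, y_i)` are pairwise distinct on `X`. -/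
def Twist {n N : ℕ} (X : Set (Euc n)) (c : Euc n → Fin N → ℝ) : Prop :=
  ∀ x ∈ X, ∀ i j : Fin N, i ≠ j →
    gradient (fun z => c z i) x ≠ gradient (fun z => c z j) x

/-- `X` has Lipschitz boundary: near every boundary point, `X` coincides with the epigraph
of a Lipschitz function over some hyperplane. -/
def HasLipschitzBoundary {n : ℕ} (X : Set (Euc n)) : Prop :=
  ∀ x ∈ frontier X, ∃ (v : Euc n) (g : Euc n → ℝ) (K : NNReal) (r : ℝ),
    0 < r ∧ ‖v‖ = 1 ∧ LipschitzWith K g ∧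
    ∀ z ∈ ball x r, (z ∈ X ↔ g (z - ⟪z, v⟫ • v) ≤ ⟪z, v⟫)

/-- The `(q,1)`-Poincaré–Wirtinger inequality with constant `CPW`. -/
def PWIneq {n : ℕ} (μ : Measure (Euc n)) (q CPW : ℝ) : Prop :=
  ∀ f : Euc n → ℝ, ContDiff ℝ 1 f →
    (∫ x, |f x - ∫ z, f z ∂μ| ^ q ∂μ) ^ (1 / q) ≤ CPW * ∫ x, ‖gradient f x‖ ∂μ

/-- Loeper's condition (QC): for each `i`, a convex set `X_i` together with a `C²`
diffeomorphism `exp_i^c : X_i → X` such that all sublevel sets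
`{p ∈ X_i : -c(exp_i^c p, y_k) + c(exp_i^c p, y_i) ≤ t}` are convex. -/
structure LoeperSystem {n N : ℕ} (X : Set (Euc n)) (c : Euc n → Fin N → ℝ) where
  dom : Fin N → Set (Euc n)
  exp : Fin N → Euc n → Euc n
  expInv : Fin N → Euc n → Euc n
  convex_dom : ∀ i, Convex ℝ (dom i)
  contDiffOn_exp : ∀ i, ContDiffOn ℝ 2 (exp i) (dom i)
  contDiffOn_expInv : ∀ i, ContDiffOn ℝ 2 (expInv i) X
  mapsTo_exp : ∀ i, MapsTo (exp i) (dom i) X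
  mapsTo_expInv : ∀ i, MapsTo (expInv i) X (dom i)
  left_inv : ∀ i, ∀ p ∈ dom i, expInv i (exp i p) = p
  right_inv : ∀ i, ∀ z ∈ X, exp i (expInv i z) = z
  sublevel_convex : ∀ i k : Fin N, ∀ t : ℝ,
    Convex ℝ {p ∈ dom i | -(c (exp i p) k) + c (exp i p) i ≤ t}

/-- `(T, λ)` minimizes the semi-discrete optimal transport problem with storage fee
given by the convex indicator function of the set `S`. -/
def IsOptimalPair {n N : ℕ} (μ : Measure (Euc n)) (c : Euc n → Fin N → ℝ)
    (T : Euc n → Fin N) (lam : Fin N → ℝ) (S : Set (Fin N → ℝ)) : Prop :=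
  Measurable T ∧ (∀ i, μ (T ⁻¹' {i}) = ENNReal.ofReal (lam i)) ∧ lam ∈ S ∧
    ∀ (T' : Euc n → Fin N) (lam' : Fin N → ℝ), Measurable T' →
      (∀ i, μ (T' ⁻¹' {i}) = ENNReal.ofReal (lam' i)) → lam' ∈ S →
      ∫ x, c x (T x) ∂μ ≤ ∫ x, c x (T' x) ∂μ

/-- The support of a measure. -/
def msupport {n : ℕ} (μ : Measure (Euc n)) : Set (Euc n) :=
  {x | ∀ U ∈ nhds x, 0 < μ U}

/-- The pseudo `c`-transform `φ^{c†}` of a function `φ`. -/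
def cDagger {n N : ℕ} (μ : Measure (Euc n)) (c : Euc n → Fin N → ℝ) (φ : Euc n → ℝ) :
    Fin N → ℝ :=
  fun i => sSup ((fun x => -(c x i) - φ x) '' msupport μ)

/-! Put `d = ψ₁ - ψ₂`. A point of `Lag_i(ψ₁) ∩ Lag_k(ψ₂)` satisfies `d i ≤ d k`, strictly when
`i ≠ k` unless the maximum defining `ψ₁^{c*}` is attained twice there. Such ties lie on level sets
of `c(·, y_k) - c(·, y_i)`, a `C¹` function whose derivative vanishes nowhere on `X` by (Twist), so
they are Lebesgue-null. Hence, for `S = {k | d k ≤ d i}`, the cells `Lag_k(ψ₂)`, `k ∈ S`, lie a.e.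
in `⋃_{k ∈ S} Lag_k(ψ₁)` and avoid `Lag_i(ψ₁) \ Lag_i(ψ₂)`, which gives
`μ(Lag_i(ψ₁) \ Lag_i(ψ₂)) ≤ ∑_{k ∈ S} (λ₁ k - λ₂ k) ≤ ‖λ₁ - λ₂‖₁`. -/

open Function

section LevelSet

variable {E : Type*} [NormedAddCommGroup E] [NormedSpace ℝ E]

theorem exists_apply_eq_one_of_ne_zero {L : E →L[ℝ] ℝ} (hL : L ≠ 0) : ∃ w, L w = 1 := by
  obtain ⟨v, hv⟩ := DFunLike.ne_iff.1 hL
  exact ⟨(L v)⁻¹ • v, by simp [inv_mul_cancel₀ hv]⟩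

variable [FiniteDimensional ℝ E] [MeasurableSpace E] [BorelSpace E] (μ : Measure E)
  [μ.IsAddHaarMeasure]

theorem addHaar_eq_zero_of_addHaar_image_eq_zero {f : E → E} {f' : E → E →L[ℝ] E} {s : Set E}
    (hs : MeasurableSet s) (hf' : ∀ x ∈ s, HasFDerivWithinAt f (f' x) s x) (hinj : InjOn f s)
    (hdet : ∀ x ∈ s, (f' x).det ≠ 0) (himage : μ (f '' s) = 0) : μ s = 0 := by
  have hdet_meas : AEMeasurable (fun x => ENNReal.ofReal |(f' x).det|) (μ.restrict s) :=
    (ContinuousLinearMap.continuous_det.measurable.comp_aemeasurable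
      (aemeasurable_fderivWithin μ hs hf')).abs.ennreal_ofReal
  rw [← lintegral_abs_det_fderiv_eq_addHaar_image μ hs hf' hinj,
    setLIntegral_eq_zero_iff' hs hdet_meas] at himage
  refine measure_eq_zero_iff_ae_notMem.2 (himage.mono fun x hx hxs => hdet x hxs ?_)
  simpa using hx hxs

theorem addHaar_setOf_apply_eq {L : E →L[ℝ] ℝ} (hL : L ≠ 0) (a : ℝ) : μ {x | L x = a} = 0 := by
  obtain ⟨w, hw⟩ := exists_apply_eq_one_of_ne_zero hL
  have hker : LinearMap.ker (L : E →ₗ[ℝ] ℝ) ≠ ⊤ := fun h => by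
    simpa [hw] using LinearMap.congr_fun (LinearMap.ker_eq_top.1 h) w
  have : {x | L x = a} = (· - a • w) ⁻¹' (LinearMap.ker (L : E →ₗ[ℝ] ℝ)) := by
    ext x; simp [hw, sub_eq_zero]
  rw [this]
  simp only [sub_eq_add_neg, measure_preimage_add_right]
  exact Measure.addHaar_submodule μ _ hker

theorem addHaar_setOf_eq_and_fderiv_ne_zero {f : E → ℝ} (hf : ContDiff ℝ 1 f) (a : ℝ) :
    μ {x | f x = a ∧ fderiv ℝ f x ≠ 0} = 0 := by
  refine measure_null_of_locally_null _ fun x₀ ⟨_, hx₀⟩ => ?_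
  set L := fderiv ℝ f x₀
  obtain ⟨w, hw⟩ := exists_apply_eq_one_of_ne_zero hx₀
  -- `Φ` has derivative `id` at `x₀` and maps the level set `{f = a}` into `{L = a}`.
  set Φ : E → E := fun x => x + (f x - L x) • w
  have hΦ : ContDiff ℝ 1 Φ := contDiff_id.add ((hf.sub L.contDiff).smul contDiff_const)
  have hΦx₀ : HasStrictFDerivAt Φ (ContinuousLinearEquiv.refl ℝ E : E →L[ℝ] E) x₀ := by
    convert (hasStrictFDerivAt_id x₀).add
      (((hf.hasStrictFDerivAt one_ne_zero).sub L.hasStrictFDerivAt).smul_const w) using 1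
    · rfl
    · ext; simp [L]
  set F := hΦx₀.toOpenPartialHomeomorph Φ
  set U := F.source ∩ {x | (fderiv ℝ Φ x).det ≠ 0}
  have hU : IsOpen U := F.open_source.inter (isOpen_ne_fun
    (ContinuousLinearMap.continuous_det.comp (hΦ.continuous_fderiv one_ne_zero)) continuous_const)
  have hx₀U : x₀ ∈ U := ⟨hΦx₀.mem_toOpenPartialHomeomorph_source,
    by simp [hΦx₀.hasFDerivAt.fderiv, ContinuousLinearMap.det]⟩
  refine ⟨_, inter_mem_nhdsWithin _ (hU.mem_nhds hx₀U),
    measure_mono_null (t := U ∩ f ⁻¹' {a}) (fun x hx => ⟨hx.2, hx.1.1⟩) ?_⟩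
  refine addHaar_eq_zero_of_addHaar_image_eq_zero μ
    (hU.measurableSet.inter (hf.continuous.measurable (measurableSet_singleton a)))
    (fun x _ => ((hΦ.differentiable one_ne_zero) x).hasFDerivAt.hasFDerivWithinAt)
    (F.injOn.mono fun x hx => hx.1.1) (fun x hx => hx.1.2)
    (measure_mono_null ?_ (addHaar_setOf_apply_eq μ hx₀ a))
  rintro _ ⟨x, ⟨-, hx⟩, rfl⟩
  show L (x + (f x - L x) • w) = a
  rw [map_add, map_smul, hw, smul_eq_mul, mul_one, add_sub_cancel, hx]

end LevelSet

theorem measureReal_sdiff_le_sum_abs_sub {ι α : Type*} [Fintype ι] [MeasurableSpace α]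
    {μ : Measure α} [IsFiniteMeasure μ] {A B : ι → Set α} (d : ι → ℝ)
    (hB : ∀ k, MeasurableSet (B k)) (hBdisj : Pairwise (AEDisjoint μ on B))
    (hcov : ⋃ k, B k ⊆ ⋃ j, A j)
    (hd : ∀ᵐ x ∂μ, ∀ i k, x ∈ A i → x ∈ B k → i ≠ k → d i < d k) (i : ι) :
    μ.real (A i \ B i) ≤ ∑ k, |μ.real (A k) - μ.real (B k)| := by
  classical
  set S := Finset.univ.filter fun k => d k ≤ d i
  set U := ⋃ k ∈ S, A k
  set V := ⋃ k ∈ S, B k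
  have hVU : V ≤ᵐ[μ] U := by
    filter_upwards [hd] with x hx hxV
    obtain ⟨k, hk, hxk⟩ := mem_iUnion₂.1 hxV
    obtain ⟨j, hxj⟩ := mem_iUnion.1 (hcov (mem_iUnion.2 ⟨k, hxk⟩))
    refine mem_iUnion₂.2 ⟨j, ?_, hxj⟩
    simp only [S, Finset.mem_filter, Finset.mem_univ, true_and] at hk ⊢
    rcases eq_or_ne j k with rfl | hjk
    · exact hk
    · exact (hx j k hxj hxk hjk).le.trans hk
  have hAB : A i \ B i ≤ᵐ[μ] U \ V := by
    filter_upwards [hd] with x hx ⟨hxA, hxB⟩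
    refine ⟨mem_biUnion (by simp [S]) hxA, fun hxV => ?_⟩
    obtain ⟨k, hk, hxk⟩ := mem_iUnion₂.1 hxV
    have hik : i ≠ k := by rintro rfl; exact hxB hxk
    simp only [S, Finset.mem_filter, Finset.mem_univ, true_and] at hk
    exact (hx i k hxA hxk hik).not_ge hk
  calc μ.real (A i \ B i) ≤ μ.real (U \ V) :=
        ENNReal.toReal_mono (measure_ne_top _ _) (measure_mono_ae hAB)
    _ = μ.real U - μ.real V := by
        rw [measureReal_sdiff' (S.measurableSet_biUnion fun k _ => hB k) (measure_ne_top μ U)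
            (measure_ne_top μ V),
          measureReal_congr (union_ae_eq_left_iff_ae_subset.2 hVU)]
    _ ≤ ∑ k ∈ S, μ.real (A k) - ∑ k ∈ S, μ.real (B k) := by
        rw [measureReal_biUnion_finset₀ (hBdisj.set_pairwise _)
          fun k _ => (hB k).nullMeasurableSet]
        gcongr
        exact measureReal_biUnion_finset_le S A
    _ = ∑ k ∈ S, (μ.real (A k) - μ.real (B k)) := (Finset.sum_sub_distrib _ _).symm
    _ ≤ ∑ k ∈ S, |μ.real (A k) - μ.real (B k)| := Finset.sum_le_sum fun k _ => le_abs_self _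
    _ ≤ ∑ k, |μ.real (A k) - μ.real (B k)| :=
        Finset.sum_le_sum_of_subset_of_nonneg S.subset_univ fun k _ _ => abs_nonneg _

section Laguerre

variable {n N : ℕ} {X : Set (Euc n)} {c : Euc n → Fin N → ℝ} {ψ : Fin N → ℝ} {x : Euc n}
  {i k : Fin N}

theorem le_cStar (k : Fin N) : -(c x k) - ψ k ≤ cStar c ψ x :=
  le_ciSup (f := fun i => -(c x i) - ψ i) (Finite.bddAbove_range _) k

theorem mem_Lag_iff : x ∈ Lag X c ψ i ↔ x ∈ X ∧ ∀ k, -(c x k) - ψ k ≤ -(c x i) - ψ i :=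
  and_congr_right fun _ =>
    ⟨fun h k => h ▸ le_cStar k, fun h =>
      have : Nonempty (Fin N) := ⟨i⟩
      le_antisymm (le_cStar i) (ciSup_le h)⟩

theorem exists_mem_Lag [Nonempty (Fin N)] (hx : x ∈ X) : ∃ i, x ∈ Lag X c ψ i := by
  obtain ⟨i, hi⟩ := Finite.exists_max fun i => -(c x i) - ψ i
  exact ⟨i, mem_Lag_iff.2 ⟨hx, hi⟩⟩

theorem measurableSet_Lag (hX : MeasurableSet X) (hc : ∀ k, Measurable fun x => c x k) :
    MeasurableSet (Lag X c ψ i) :=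
  hX.inter <| measurableSet_eq_fun ((hc i).neg.sub_const _)
    (Measurable.iSup fun k => (hc k).neg.sub_const _)

theorem fderiv_sub_ne_zero_of_twist (hreg : Reg c) (htwist : Twist X c) (hx : x ∈ X)
    (hik : i ≠ k) : fderiv ℝ (fun z => c z k - c z i) x ≠ 0 := by
  rw [fderiv_fun_sub ((hreg k).differentiable two_ne_zero x)
    ((hreg i).differentiable two_ne_zero x), sub_ne_zero]
  intro h
  exact htwist x hx i k hik (by rw [gradient, gradient, h])

theorem ae_injective_of_twist (hreg : Reg c) (htwist : Twist X c) {μ : Measure (Euc n)}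
    (hac : μ ≪ volume) (ψ : Fin N → ℝ) :
    ∀ᵐ x ∂μ, x ∈ X → Injective fun i => -(c x i) - ψ i := by
  have hpair : ∀ i k, ∀ᵐ x ∂μ, x ∈ X → -(c x i) - ψ i = -(c x k) - ψ k → i = k := by
    intro i k
    rcases eq_or_ne i k with rfl | hik
    · exact ae_of_all _ fun _ _ _ => rfl
    refine ae_iff.2 (hac (measure_mono_null ?_ (addHaar_setOf_eq_and_fderiv_ne_zero volume
      (((hreg k).sub (hreg i)).of_le one_le_two) (ψ i - ψ k))))
    intro x hx
    simp only [Classical.not_imp, mem_ofPred_eq] at hx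
    exact ⟨by linarith [hx.2.1], fderiv_sub_ne_zero_of_twist hreg htwist hx.1 hik⟩
  filter_upwards [ae_all_iff.2 fun i => ae_all_iff.2 (hpair i)] with x hx hxX i k
  exact hx i k hxX

theorem aedisjoint_Lag {μ : Measure (Euc n)}
    (hψ : ∀ᵐ x ∂μ, x ∈ X → Injective fun i => -(c x i) - ψ i) (hik : i ≠ k) :
    AEDisjoint μ (Lag X c ψ i) (Lag X c ψ k) :=
  measure_eq_zero_iff_ae_notMem.2 <| hψ.mono fun _ hx ⟨hi, hk⟩ =>
    hik (hx hi.1 (hi.2.trans hk.2.symm))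

theorem sub_lt_sub_of_mem_Lag {ψ₁ ψ₂ : Fin N → ℝ}
    (hψ₁ : Injective fun i => -(c x i) - ψ₁ i)
    (h₁ : x ∈ Lag X c ψ₁ i) (h₂ : x ∈ Lag X c ψ₂ k) (hik : i ≠ k) :
    ψ₁ i - ψ₂ i < ψ₁ k - ψ₂ k := by
  have hlt : -(c x k) - ψ₁ k < -(c x i) - ψ₁ i :=
    ((mem_Lag_iff.1 h₁).2 k).lt_of_ne fun h => hik (hψ₁ h).symm
  linarith [(mem_Lag_iff.1 h₂).2 i]

theorem measureReal_Lag_sdiff_le (hX : MeasurableSet X) (hreg : Reg c) (htwist : Twist X c)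
    {μ : Measure (Euc n)} [IsFiniteMeasure μ] (hac : μ ≪ volume) (ψ₁ ψ₂ : Fin N → ℝ)
    (i : Fin N) :
    μ.real (Lag X c ψ₁ i \ Lag X c ψ₂ i)
      ≤ ∑ k, |μ.real (Lag X c ψ₁ k) - μ.real (Lag X c ψ₂ k)| := by
  refine measureReal_sdiff_le_sum_abs_sub (ψ₁ - ψ₂)
    (fun k => measurableSet_Lag hX fun k => (hreg k).continuous.measurable)
    (fun k l hkl => aedisjoint_Lag (ae_injective_of_twist hreg htwist hac ψ₂) hkl) ?_ ?_ i
  · refine iUnion_subset fun k x hx => ?_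
    have : Nonempty (Fin N) := ⟨k⟩
    exact mem_iUnion.2 (exists_mem_Lag hx.1)
  · filter_upwards [ae_injective_of_twist hreg htwist hac ψ₁] with x hx i k h₁ h₂ hik
    exact sub_lt_sub_of_mem_Lag (hx h₁.1) h₁ h₂ hik

end Laguerre

theorem stmt0_general {n N : ℕ}
    (X : Set (Euc n)) (hXcpt : IsCompact X)
    (c : Euc n → Fin N → ℝ) (hreg : Reg c) (htwist : Twist X c)
    (μ : Measure (Euc n)) [IsProbabilityMeasure μ]
    (hac : μ ≪ volume)
    (lam₁ lam₂ : Fin N → ℝ)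
    (ψ₁ ψ₂ : Fin N → ℝ)
    (hG₁ : ∀ i, Gmap μ X c ψ₁ i = lam₁ i)
    (hG₂ : ∀ i, Gmap μ X c ψ₂ i = lam₂ i) :
    ∑ i, (μ (symmDiff (Lag X c ψ₁ i) (Lag X c ψ₂ i))).toReal
      ≤ 4 * N * ∑ i, |lam₁ i - lam₂ i| := by
  set ε := ∑ i, |lam₁ i - lam₂ i|
  have hX : MeasurableSet X := hXcpt.isClosed.measurableSet
  have hε : ∑ k, |μ.real (Lag X c ψ₁ k) - μ.real (Lag X c ψ₂ k)| = ε := by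
    simp only [ε, ← hG₁, ← hG₂]; rfl
  have hε' : ∑ k, |μ.real (Lag X c ψ₂ k) - μ.real (Lag X c ψ₁ k)| = ε := by
    simpa only [abs_sub_comm] using hε
  calc ∑ i, (μ (symmDiff (Lag X c ψ₁ i) (Lag X c ψ₂ i))).toReal
      ≤ ∑ i, (μ.real (Lag X c ψ₁ i \ Lag X c ψ₂ i) + μ.real (Lag X c ψ₂ i \ Lag X c ψ₁ i)) :=
        Finset.sum_le_sum fun i _ => measureReal_union_le _ _
    _ ≤ ∑ _i : Fin N, 2 * ε := Finset.sum_le_sum fun i _ => by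
        linarith [measureReal_Lag_sdiff_le hX hreg htwist hac ψ₁ ψ₂ i,
          measureReal_Lag_sdiff_le hX hreg htwist hac ψ₂ ψ₁ i]
    _ ≤ 4 * N * ε := by
        rw [Finset.sum_const, Finset.card_univ, Fintype.card_fin, nsmul_eq_mul]
        nlinarith [Finset.sum_nonneg fun i (_ : i ∈ Finset.univ) => abs_nonneg (lam₁ i - lam₂ i)]

/-- **Theorem 1.2 (μ-symmetric stability of Laguerre cells).** -/
theorem stmt0 {n N : ℕ} (hn : 2 ≤ n) (hN : 0 < N)
    (X : Set (Euc n)) (hXcpt : IsCompact X)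
    (c : Euc n → Fin N → ℝ) (hreg : Reg c) (htwist : Twist X c)
    (μ : Measure (Euc n)) [IsProbabilityMeasure μ]
    (hac : μ ≪ volume) (hsupp : μ Xᶜ = 0)
    (lam₁ lam₂ : Fin N → ℝ)
    (hlam₁ : (∑ i, lam₁ i) = 1 ∧ ∀ i, 0 ≤ lam₁ i)
    (hlam₂ : (∑ i, lam₂ i) = 1 ∧ ∀ i, 0 ≤ lam₂ i)
    (ψ₁ ψ₂ : Fin N → ℝ)
    (hG₁ : ∀ i, Gmap μ X c ψ₁ i = lam₁ i)
    (hG₂ : ∀ i, Gmap μ X c ψ₂ i = lam₂ i) :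
    ∑ i, (μ (symmDiff (Lag X c ψ₁ i) (Lag X c ψ₂ i))).toReal
      ≤ 4 * N * ∑ i, |lam₁ i - lam₂ i| :=
  stmt0_general X hXcpt c hreg htwist μ hac lam₁ lam₂ ψ₁ ψ₂ hG₁ hG₂
end
end

section
/- Suppose c satisfies (Reg) and (Twist) and μ is absolutely continuous. Then for any ψ₁, ψ₂ ∈ ℝᴺ the exchange digraph is acyclic; that is, there do not exist l ≥ 2 and distinct indices i_1,…,i_l ∈ {1,…,N} such that, setting i_{l+1} := i_1, one has μ(Lag_{i_j}(ψ₁) ∩ Lag_{i_{j+1}}(ψ₂)) > 0 for every j = 1,…,l. -/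
open MeasureTheory Metric Set Filter Bornology
open scoped RealInnerProductSpace ENNReal NNReal Topology symmDiff

noncomputable section

/-! Along an edge `i → j` a point of `Lag_i(ψ₁) ∩ Lag_j(ψ₂)` forces
`ψ₁ i - ψ₂ i ≤ ψ₁ j - ψ₂ j`, so around a cycle all these inequalities are equalities, and then
`c(·, y_j) - c(·, y_i)` is constant on `Lag_i(ψ₁) ∩ Lag_j(ψ₂)`. By (Twist) this difference has
nonvanishing derivative, and a set on which such a function is constant has no Lebesgue density
points, hence is Lebesgue-null; absolute continuity of `μ` finishes. -/

theorem add_eq_of_forall_le_add {G M : Type*} [AddGroup G] [Fintype G] [AddCommMonoid M]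
    [PartialOrder M] [IsOrderedCancelAddMonoid M] {f : G → M} {g : G}
    (h : ∀ j, f j ≤ f (j + g)) (j : G) : f (j + g) = f j := by
  have hsum : ∑ k, f k = ∑ k, f (k + g) :=
    (Fintype.sum_equiv (Equiv.addRight g) _ _ fun _ => rfl).symm
  exact ((Finset.sum_eq_sum_iff_of_le fun k _ => h k).mp hsum j (Finset.mem_univ j)).symm

theorem ContinuousLinearMap.exists_forall_mem_ball_half_le {E : Type*} [NormedAddCommGroup E]
    [NormedSpace ℝ E] {f' : E →L[ℝ] ℝ} (hf' : f' ≠ 0) :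
    ∃ w : E, ∃ ρ > 0, ∀ z ∈ ball w ρ, 1 / 2 ≤ f' z := by
  obtain ⟨v, hv⟩ : ∃ v, f' v ≠ 0 := by
    by_contra! h
    exact hf' (ContinuousLinearMap.ext h)
  have hf'pos : 0 < ‖f'‖ := norm_pos_iff.mpr hf'
  refine ⟨(f' v)⁻¹ • v, (2 * ‖f'‖)⁻¹, by positivity, fun z hz => ?_⟩
  rw [mem_ball, dist_eq_norm] at hz
  have hdiff : |f' z - 1| ≤ 1 / 2 :=
    calc |f' z - 1| = ‖f' (z - (f' v)⁻¹ • v)‖ := by simp [hv]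
      _ ≤ ‖f'‖ * ‖z - (f' v)⁻¹ • v‖ := f'.le_opNorm _
      _ ≤ ‖f'‖ * (2 * ‖f'‖)⁻¹ := by gcongr
      _ = 1 / 2 := by field_simp
  linarith [(abs_le.mp hdiff).1]

section LevelSet

variable {E : Type*} [NormedAddCommGroup E] [NormedSpace ℝ E] [MeasurableSpace E] [BorelSpace E]
  [FiniteDimensional ℝ E] (μ : Measure E) [μ.IsAddHaarMeasure]

/- At a density point `x`, `s` meets every small rescaled copy `x + r • ball w ρ` of a ball on
which `f' ≥ 1/2`; at such a point `f` has moved by about `r / 2` to first order, while the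
little-o remainder is only a small multiple of `r`. -/
theorem not_tendsto_density_of_hasFDerivAt_ne_zero {f : E → ℝ} {f' : E →L[ℝ] ℝ} {x : E}
    {s : Set E} (hf : HasFDerivAt f f' x) (hf' : f' ≠ 0) (hs : s ⊆ f ⁻¹' {f x}) :
    ¬ Tendsto (fun r => μ (s ∩ closedBall x r) / μ (closedBall x r)) (𝓝[>] 0) (𝓝 1) := by
  intro hdens
  obtain ⟨w, ρ, hρ, hball⟩ := f'.exists_forall_mem_ball_half_le hf'
  set M := ‖w‖ + ρ
  have hM : 0 < M := by positivity
  obtain ⟨r₀, hr₀, hr₀small⟩ := Metric.eventually_nhds_iff.mp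
    ((hasFDerivAt_iff_isLittleO_nhds_zero.mp hf).def (show 0 < (4 * M)⁻¹ by positivity))
  have hnear : ∀ᶠ r in 𝓝[>] (0 : ℝ), r < r₀ / M :=
    nhdsWithin_le_nhds (Iio_mem_nhds (by positivity))
  obtain ⟨r, ⟨y, hys, hyt⟩, hrpos : 0 < r, hrr₀⟩ :=
    ((Measure.eventually_nonempty_inter_smul_of_density_one μ s x hdens (ball w ρ)
      measurableSet_ball (measure_ball_pos μ w hρ).ne').and
      (eventually_mem_nhdsWithin.and hnear)).exists
  rw [Set.singleton_add] at hyt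
  obtain ⟨_, ⟨z, hz, rfl⟩, rfl⟩ := hyt
  have hzM : ‖z‖ ≤ M := (norm_lt_of_mem_ball hz).le
  have hrz : ‖r • z‖ < r₀ := by
    rw [norm_smul, Real.norm_of_nonneg hrpos.le]
    calc r * ‖z‖ ≤ r * M := by gcongr
      _ < r₀ := by rwa [lt_div_iff₀ hM] at hrr₀
  have hest := hr₀small (by simpa using hrz)
  rw [show f (x + r • z) = f x from hs hys, sub_self, zero_sub, norm_neg, map_smul, smul_eq_mul,
    Real.norm_eq_abs, norm_smul, Real.norm_of_nonneg hrpos.le, abs_mul, abs_of_pos hrpos] at hest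
  have hMinv : (4 * M)⁻¹ * M = 1 / 4 := by field_simp
  have : r * (1 / 2) ≤ r * (1 / 4) :=
    calc r * (1 / 2) ≤ r * |f' z| := by gcongr; exact (hball z hz).trans (le_abs_self _)
      _ ≤ (4 * M)⁻¹ * (r * ‖z‖) := hest
      _ ≤ (4 * M)⁻¹ * (r * M) := by gcongr
      _ = r * (1 / 4) := by rw [← hMinv]; ring
  linarith

theorem addHaar_eq_zero_of_subset_preimage_singleton {f : E → ℝ} {s : Set E} {a : ℝ}
    (hf : ∀ x ∈ s, ∃ f' : E →L[ℝ] ℝ, HasFDerivAt f f' x ∧ f' ≠ 0) (hs : s ⊆ f ⁻¹' {a}) :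
    μ s = 0 := by
  by_contra hμ
  obtain ⟨x, hx, hdens⟩ :=
    Measure.exists_mem_of_measure_ne_zero_of_ae hμ (Besicovitch.ae_tendsto_measure_inter_div μ s)
  obtain ⟨f', hfx, hf'⟩ := hf x hx
  have hfa : f x = a := hs hx
  exact not_tendsto_density_of_hasFDerivAt_ne_zero μ hfx hf' (hfa ▸ hs) hdens

end LevelSet

section Laguerre

variable {n N : ℕ} {X : Set (Euc n)} {c : Euc n → Fin N → ℝ}

theorem le_of_mem_Lag {ψ : Fin N → ℝ} {i : Fin N} {x : Euc n} (hx : x ∈ Lag X c ψ i)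
    (k : Fin N) : -c x k - ψ k ≤ -c x i - ψ i :=
  hx.2 ▸ le_ciSup (f := fun k => -c x k - ψ k) (Set.finite_range _).bddAbove k

theorem sub_le_sub_of_mem_Lag_inter {ψ₁ ψ₂ : Fin N → ℝ} {i j : Fin N} {x : Euc n}
    (hx : x ∈ Lag X c ψ₁ i ∩ Lag X c ψ₂ j) : ψ₁ i - ψ₂ i ≤ ψ₁ j - ψ₂ j := by
  linarith [le_of_mem_Lag hx.1 j, le_of_mem_Lag hx.2 i]

theorem cost_sub_eq_of_mem_Lag_inter {ψ₁ ψ₂ : Fin N → ℝ} {i j : Fin N} {x : Euc n}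
    (hx : x ∈ Lag X c ψ₁ i ∩ Lag X c ψ₂ j) (hψ : ψ₁ i - ψ₂ i = ψ₁ j - ψ₂ j) :
    c x j - c x i = ψ₂ i - ψ₂ j := by
  linarith [le_of_mem_Lag hx.1 j, le_of_mem_Lag hx.2 i]

theorem Twist.exists_hasFDerivAt_sub_ne_zero (hreg : Reg c) (htwist : Twist X c) {x : Euc n}
    (hx : x ∈ X) {i j : Fin N} (hij : i ≠ j) :
    ∃ f' : Euc n →L[ℝ] ℝ, HasFDerivAt (fun z => c z j - c z i) f' x ∧ f' ≠ 0 := by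
  have hdiff : ∀ k, DifferentiableAt ℝ (fun z => c z k) x :=
    fun k => (hreg k).differentiable (by norm_num) x
  refine ⟨_, (hdiff j).hasFDerivAt.sub (hdiff i).hasFDerivAt, fun h => htwist x hx j i hij.symm ?_⟩
  simp only [gradient, sub_eq_zero.mp h]

end Laguerre

theorem stmt5_general {n N : ℕ}
    (X : Set (Euc n))
    (c : Euc n → Fin N → ℝ) (hreg : Reg c) (htwist : Twist X c)
    (μ : Measure (Euc n))
    (hac : μ ≪ volume)
    (ψ₁ ψ₂ : Fin N → ℝ) :
    ∀ (l : ℕ) (idx : Fin (l + 2) → Fin N), Function.Injective idx →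
      ¬ ∀ j : Fin (l + 2), 0 < μ (Lag X c ψ₁ (idx j) ∩ Lag X c ψ₂ (idx (j + 1))) := by
  intro l idx hidx hcycle
  have hmono : ∀ j, ψ₁ (idx j) - ψ₂ (idx j) ≤ ψ₁ (idx (j + 1)) - ψ₂ (idx (j + 1)) := fun j =>
    sub_le_sub_of_mem_Lag_inter (nonempty_of_measure_ne_zero (hcycle j).ne').choose_spec
  have hψ := (add_eq_of_forall_le_add hmono 0).symm
  have hne : idx 0 ≠ idx (0 + 1) := hidx.ne (by simp)
  have hnull : volume (Lag X c ψ₁ (idx 0) ∩ Lag X c ψ₂ (idx (0 + 1))) = 0 :=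
    addHaar_eq_zero_of_subset_preimage_singleton volume
      (fun x hx => htwist.exists_hasFDerivAt_sub_ne_zero hreg hx.1.1 hne)
      (fun x hx => cost_sub_eq_of_mem_Lag_inter hx hψ)
  exact (hcycle 0).ne' (hac hnull)

/-- **Lemma 2.1: the exchange digraph is acyclic.** -/
theorem stmt5 {n N : ℕ} (hn : 2 ≤ n) (hN : 0 < N)
    (X : Set (Euc n)) (hXcpt : IsCompact X)
    (c : Euc n → Fin N → ℝ) (hreg : Reg c) (htwist : Twist X c)
    (μ : Measure (Euc n)) [IsProbabilityMeasure μ]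
    (hac : μ ≪ volume) (hsupp : μ Xᶜ = 0)
    (ψ₁ ψ₂ : Fin N → ℝ) :
    ∀ (l : ℕ) (idx : Fin (l + 2) → Fin N), Function.Injective idx →
      ¬ ∀ j : Fin (l + 2), 0 < μ (Lag X c ψ₁ (idx j) ∩ Lag X c ψ₂ (idx (j + 1))) :=
  stmt5_general X c hreg htwist μ hac ψ₁ ψ₂
end
end

section
/- Suppose c satisfies (Reg) and (Twist), X is compact with Lipschitz boundary, μ = ρ dx with ρ ∈ C⁰(X) satisfies a (q,1)-Poincaré–Wirtinger inequality with constant C_PW where 1 ≤ q ≤ 2. Fix ε > 0 and let ψ ∈ ℝᴺ satisfy G^i(ψ) > ε for all i, and suppose G is differentiable at ψ with ∂_i G^j(ψ) = ∫_{Lag_i(ψ) ∩ Lag_j(ψ)} ρ(x)/‖∇_x c(x,y_i) − ∇_x c(x,y_j)‖ dℋ^{n−1}(x) for all i ≠ j. Then the undirected graph on the vertex set {1,…,N} that has an edge {i, j} exactly when ∂_i G^j(ψ) ≥ 2^{1−1/q} ε^{1/q} / (C_∇ N² C_PW) is connected. -/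
open MeasureTheory Metric Set Filter Bornology
open scoped RealInnerProductSpace ENNReal NNReal Topology symmDiff

noncomputable section

/-!
If the graph were disconnected, some set `S` of vertices would have all cross weights
`∂_i G^j(ψ)`, `i ∈ S`, `j ∉ S`, below the threshold. Raise `ψ` by `t` on `S`: the cells outside `S`
only grow, and to first order their total gain is `t` times the sum of the cross weights.
On the other hand, the gap `max_{j ∉ S} (-c(·,y_j) - ψ^j) - max_{i ∈ S} (-c(·,y_i) - ψ^i)`,
smoothed by log-sum-exp and cut off between `-t` and `0`, is a `C¹` function equal to `1` on a
cell outside `S` and to `0` on a shifted cell inside `S`, both of mass `> ε`. Its gradient is at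
most about `2 C_∇ / t` and is supported where the cells changed hands, so the Poincaré–Wirtinger
inequality bounds the gained mass from below by `t ε^{1/q} 2^{1/q-1} / (2 C_PW C_∇)`. Since
`|S| |Sᶜ| ≤ N² / 4`, the two bounds are incompatible when `q ≤ 2`.
-/

theorem SimpleGraph.exists_finset_cut_of_not_preconnected {V : Type*} [Fintype V] [DecidableEq V]
    {G : SimpleGraph V} (h : ¬G.Preconnected) :
    ∃ S : Finset V, S.Nonempty ∧ Sᶜ.Nonempty ∧ ∀ i ∈ S, ∀ j ∉ S, ¬G.Adj i j := by
  classical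
  simp only [SimpleGraph.Preconnected, not_forall] at h
  obtain ⟨u, v, huv⟩ := h
  refine ⟨Finset.univ.filter (G.Reachable u), ⟨u, by simp⟩, ⟨v, by simpa using huv⟩,
    fun i hi j hj hij => hj ?_⟩
  simp only [Finset.mem_filter, Finset.mem_univ, true_and] at hi ⊢
  exact hi.trans hij.reachable

namespace SemiDiscreteOT

section Cutoff

def halfSqPos (s : ℝ) : ℝ := max 0 s ^ 2 / 2

theorem hasDerivAt_halfSqPos (s : ℝ) : HasDerivAt halfSqPos (max 0 s) s := by
  refine hasDerivAt_of_hasDerivAt_of_ne' (x := 0) (fun y hy => ?_)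
    (by unfold halfSqPos; fun_prop) (by fun_prop) s
  rcases hy.lt_or_gt with hy | hy
  · have h : halfSqPos =ᶠ[𝓝 y] fun _ => 0 := by
      filter_upwards [eventually_lt_nhds hy] with z hz
      simp [halfSqPos, hz.le]
    simpa [max_eq_left hy.le] using (hasDerivAt_const y (0 : ℝ)).congr_of_eventuallyEq h
  · have h : halfSqPos =ᶠ[𝓝 y] fun z => z ^ 2 / 2 := by
      filter_upwards [eventually_gt_nhds hy] with z hz
      simp [halfSqPos, hz.le]
    simpa [max_eq_right hy.le] using (((hasDerivAt_id y).pow 2).div_const 2).congr_of_eventuallyEq h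

def clamp01 (s : ℝ) : ℝ := min 1 (max 0 s)

theorem continuous_clamp01 : Continuous clamp01 := by unfold clamp01; fun_prop

theorem monotone_clamp01 : Monotone clamp01 := fun _ _ h => min_le_min le_rfl (max_le_max le_rfl h)

theorem clamp01_mem_Icc (s : ℝ) : clamp01 s ∈ Icc 0 1 :=
  ⟨le_min zero_le_one (le_max_left 0 s), min_le_left _ _⟩

theorem clamp01_of_nonpos {s : ℝ} (h : s ≤ 0) : clamp01 s = 0 := by simp [clamp01, h]

theorem clamp01_of_one_le {s : ℝ} (h : 1 ≤ s) : clamp01 s = 1 := by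
  simp [clamp01, h, max_eq_right (zero_le_one.trans h)]

def ramp (s : ℝ) : ℝ := halfSqPos s - halfSqPos (s - 1)

theorem hasDerivAt_ramp (s : ℝ) : HasDerivAt ramp (clamp01 s) s := by
  have h := (hasDerivAt_halfSqPos s).sub ((hasDerivAt_halfSqPos (s - 1)).comp s
    ((hasDerivAt_id s).sub_const 1))
  refine h.congr_deriv ?_
  simp only [clamp01, mul_one]
  rcases le_total s 0 with hs | hs
  · simp [hs, show s - 1 ≤ 0 by linarith]
  rcases le_total s 1 with hs1 | hs1
  · simp [hs, hs1, show s - 1 ≤ 0 by linarith]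
  · simp [hs1, max_eq_right hs, show 0 ≤ s - 1 by linarith]

theorem ramp_of_nonpos {s : ℝ} (h : s ≤ 0) : ramp s = 0 := by
  simp [ramp, halfSqPos, h, show s - 1 ≤ 0 by linarith]

theorem ramp_of_one_le {s : ℝ} (h : 1 ≤ s) : ramp s = s - 1 / 2 := by
  simp only [ramp, halfSqPos, max_eq_right (zero_le_one.trans h),
    max_eq_right (show 0 ≤ s - 1 by linarith)]
  ring

variable {l r w : ℝ}

/-- Its derivative is a trapezoid of height `1 / (r - l - w)` with ramps of width `w`. -/
def cutoff (l r w s : ℝ) : ℝ := (ramp ((s - l) / w) - ramp ((s - (r - w)) / w)) * (w / (r - l - w))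

def cutoffDeriv (l r w s : ℝ) : ℝ :=
  (clamp01 ((s - l) / w) - clamp01 ((s - (r - w)) / w)) / (r - l - w)

theorem hasDerivAt_cutoff (hw : 0 < w) (s : ℝ) :
    HasDerivAt (cutoff l r w) (cutoffDeriv l r w s) s := by
  have hlin : ∀ a : ℝ, HasDerivAt (fun s : ℝ => (s - a) / w) w⁻¹ s := fun a => by
    simpa using ((hasDerivAt_id s).sub_const a).div_const w
  have h := (((hasDerivAt_ramp _).comp s (hlin l)).sub
    ((hasDerivAt_ramp _).comp s (hlin (r - w)))).mul_const (w / (r - l - w))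
  refine h.congr_deriv ?_
  rw [cutoffDeriv]
  field_simp

section
variable (hw : 0 < w) (hlr : l + 2 * w ≤ r)
include hw hlr

theorem cutoffDeriv_mem_Icc (s : ℝ) : cutoffDeriv l r w s ∈ Icc 0 (r - l - w)⁻¹ := by
  have hden : 0 < r - l - w := by linarith
  have hmono : clamp01 ((s - (r - w)) / w) ≤ clamp01 ((s - l) / w) :=
    monotone_clamp01 (div_le_div_of_nonneg_right (by linarith) hw.le)
  have h1 := (clamp01_mem_Icc ((s - l) / w)).2
  have h0 := (clamp01_mem_Icc ((s - (r - w)) / w)).1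
  rw [cutoffDeriv, div_eq_mul_inv]
  exact ⟨mul_nonneg (by linarith) (by positivity),
    mul_le_of_le_one_left (by positivity) (by linarith)⟩

theorem cutoffDeriv_eq_zero {s : ℝ} (hs : s ∉ Ioo l r) : cutoffDeriv l r w s = 0 := by
  rw [mem_Ioo, not_and_or, not_lt, not_lt] at hs
  rw [cutoffDeriv, div_eq_zero_iff, sub_eq_zero]
  left
  rcases hs with hs | hs
  · rw [clamp01_of_nonpos (div_nonpos_of_nonpos_of_nonneg (by linarith) hw.le),
      clamp01_of_nonpos (div_nonpos_of_nonpos_of_nonneg (by linarith) hw.le)]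
  · rw [clamp01_of_one_le ((one_le_div hw).2 (by linarith)),
      clamp01_of_one_le ((one_le_div hw).2 (by linarith))]

theorem cutoff_of_le {s : ℝ} (hs : s ≤ l) : cutoff l r w s = 0 := by
  rw [cutoff, ramp_of_nonpos (div_nonpos_of_nonpos_of_nonneg (by linarith) hw.le),
    ramp_of_nonpos (div_nonpos_of_nonpos_of_nonneg (by linarith) hw.le), sub_self, zero_mul]

theorem cutoff_of_ge {s : ℝ} (hs : r ≤ s) : cutoff l r w s = 1 := by
  have hden : r - l - w ≠ 0 := by linarith
  rw [cutoff, ramp_of_one_le ((one_le_div hw).2 (by linarith)),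
    ramp_of_one_le ((one_le_div hw).2 (by linarith))]
  field_simp
  ring

theorem cutoff_mem_Icc (s : ℝ) : cutoff l r w s ∈ Icc 0 1 := by
  have hmono : Monotone (cutoff l r w) :=
    monotone_of_hasDerivAt_nonneg (fun s => hasDerivAt_cutoff hw s)
      (fun s => (cutoffDeriv_mem_Icc hw hlr s).1)
  constructor
  · rcases le_total s l with hs | hs
    · rw [cutoff_of_le hw hlr hs]
    · exact (cutoff_of_le hw hlr le_rfl).symm.le.trans (hmono hs)
  · rcases le_total r s with hs | hs
    · rw [cutoff_of_ge hw hlr hs]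
    · exact (hmono hs).trans (cutoff_of_ge hw hlr le_rfl).le

end

theorem exists_contDiff_cutoff {κ : ℝ} (hlr : l < r) (hκ : (r - l)⁻¹ < κ) :
    ∃ θ : ℝ → ℝ, ContDiff ℝ 1 θ ∧ (∀ s, θ s ∈ Icc 0 1) ∧ (∀ s ≤ l, θ s = 0) ∧
      (∀ s, r ≤ s → θ s = 1) ∧ ∀ s, |deriv θ s| ≤ (Ioo l r).indicator (fun _ => κ) s := by
  set w := (r - l - κ⁻¹) / 2
  have hκ0 : 0 < κ := (inv_pos.2 (sub_pos.2 hlr)).trans hκ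
  have hinv : κ⁻¹ < r - l := by rwa [inv_lt_comm₀ hκ0 (sub_pos.2 hlr)]
  have hw : 0 < w := by simp only [w]; linarith
  have hlr' : l + 2 * w ≤ r := by simp only [w]; linarith [inv_pos.2 hκ0]
  have hderiv s : deriv (cutoff l r w) s = cutoffDeriv l r w s := (hasDerivAt_cutoff hw s).deriv
  refine ⟨cutoff l r w, ?_, cutoff_mem_Icc hw hlr', fun s => cutoff_of_le hw hlr',
    fun s => cutoff_of_ge hw hlr', fun s => ?_⟩
  · rw [contDiff_one_iff_deriv, funext hderiv]
    refine ⟨fun s => (hasDerivAt_cutoff hw s).differentiableAt, ?_⟩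
    unfold cutoffDeriv
    have := continuous_clamp01
    fun_prop
  · rw [hderiv]
    by_cases hs : s ∈ Ioo l r
    · have hbound : (r - l - w)⁻¹ ≤ κ := by
        rw [inv_le_comm₀ (by linarith) hκ0]; simp only [w]; linarith
      obtain ⟨h0, h1⟩ := cutoffDeriv_mem_Icc hw hlr' s
      rw [indicator_of_mem hs, abs_of_nonneg h0]
      exact h1.trans hbound
    · rw [cutoffDeriv_eq_zero hw hlr' hs, indicator_of_notMem hs, abs_zero]

end Cutoff

section LogSumExp

variable {ι E : Type*} [NormedAddCommGroup E] [NormedSpace ℝ E] (T : Finset ι) {η : ℝ}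

def logSumExp (η : ℝ) (v : ι → ℝ) : ℝ := η * Real.log (∑ i ∈ T, Real.exp (v i / η))

variable {T}

theorem le_logSumExp (hη : 0 < η) {v : ι → ℝ} {k : ι} (hk : k ∈ T) : v k ≤ logSumExp T η v := by
  have hle : Real.exp (v k / η) ≤ ∑ i ∈ T, Real.exp (v i / η) :=
    Finset.single_le_sum (f := fun i => Real.exp (v i / η)) (fun i _ => (Real.exp_pos _).le) hk
  have hlog := (Real.le_log_iff_exp_le ((Real.exp_pos _).trans_le hle)).2 hle
  rw [logSumExp, ← div_le_iff₀' hη]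
  exact hlog

theorem logSumExp_le (hη : 0 < η) (hT : T.Nonempty) {v : ι → ℝ} {B : ℝ} (h : ∀ k ∈ T, v k ≤ B) :
    logSumExp T η v ≤ B + η * Real.log T.card := by
  have hcard : (0 : ℝ) < T.card := by exact_mod_cast hT.card_pos
  have hsum : ∑ i ∈ T, Real.exp (v i / η) ≤ T.card * Real.exp (B / η) := by
    simpa using Finset.sum_le_sum fun i hi =>
      Real.exp_le_exp.2 (div_le_div_of_nonneg_right (h i hi) hη.le)
  have hlog := Real.log_le_log (Finset.sum_pos (fun i _ => Real.exp_pos _) hT) hsum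
  rw [Real.log_mul hcard.ne' (Real.exp_pos _).ne', Real.log_exp] at hlog
  rw [logSumExp]
  calc η * Real.log (∑ i ∈ T, Real.exp (v i / η))
      ≤ η * (Real.log T.card + B / η) := mul_le_mul_of_nonneg_left hlog hη.le
    _ = B + η * Real.log T.card := by field_simp; ring

theorem hasFDerivAt_logSumExp (hη : η ≠ 0) (hT : T.Nonempty) {b : ι → E → ℝ} {x : E}
    (hb : ∀ i, DifferentiableAt ℝ (b i) x) :
    HasFDerivAt (fun y => logSumExp T η (b · y))
      (∑ i ∈ T, (Real.exp (b i x / η) / ∑ k ∈ T, Real.exp (b k x / η)) • fderiv ℝ (b i) x) x := by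
  have hpos : 0 < ∑ k ∈ T, Real.exp (b k x / η) := Finset.sum_pos (fun i _ => Real.exp_pos _) hT
  have hexp : ∀ i, HasFDerivAt (fun y => Real.exp (b i y / η))
      (Real.exp (b i x / η) • η⁻¹ • fderiv ℝ (b i) x) x := fun i => by
    simpa [div_eq_mul_inv, mul_comm] using ((hb i).hasFDerivAt.mul_const η⁻¹).exp
  have h := ((HasFDerivAt.fun_sum fun i _ => hexp i).log hpos.ne').const_mul η
  refine h.congr_fderiv ?_
  simp only [Finset.smul_sum, smul_smul]
  refine Finset.sum_congr rfl fun i _ => ?_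
  congr 1
  field_simp

theorem norm_sum_smul_le_of_convex {w : ι → ℝ} {L : ι → E} {C : ℝ} (hw0 : ∀ i ∈ T, 0 ≤ w i)
    (hw1 : ∑ i ∈ T, w i = 1) (hL : ∀ i ∈ T, ‖L i‖ ≤ C) : ‖∑ i ∈ T, w i • L i‖ ≤ C := by
  simpa using (convex_closedBall (0 : E) C).sum_mem hw0 hw1 fun i hi => by simpa using hL i hi

theorem exists_contDiff_smoothMax (hT : T.Nonempty) {b : ι → E → ℝ} (hb : ∀ i, ContDiff ℝ 1 (b i))
    {a : ℝ} (ha : 0 < a) :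
    ∃ g : E → ℝ, ContDiff ℝ 1 g ∧ (∀ x, ∀ k ∈ T, b k x ≤ g x) ∧
      (∀ x B, (∀ k ∈ T, b k x ≤ B) → g x ≤ B + a) ∧
      ∀ x C, (∀ k ∈ T, ‖fderiv ℝ (b k) x‖ ≤ C) → ‖fderiv ℝ g x‖ ≤ C := by
  have hcard : (0 : ℝ) < T.card := by exact_mod_cast hT.card_pos
  set η := a / T.card
  have hη : 0 < η := div_pos ha hcard
  have hηlog : η * Real.log T.card ≤ a :=
    (mul_le_mul_of_nonneg_left (Real.log_le_self hcard.le) hη.le).trans_eq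
      (div_mul_cancel₀ a hcard.ne')
  refine ⟨fun y => logSumExp T η (b · y), ?_, fun x k hk => le_logSumExp (v := (b · x)) hη hk,
    fun x B hB => (logSumExp_le hη hT hB).trans (by linarith), fun x C hC => ?_⟩
  · have hsum : ContDiff ℝ 1 fun y => ∑ i ∈ T, Real.exp (b i y / η) :=
      ContDiff.sum fun i _ => ((hb i).div_const η).exp
    exact contDiff_const.mul (hsum.log fun y => (Finset.sum_pos (fun i _ => Real.exp_pos _) hT).ne')
  · rw [(hasFDerivAt_logSumExp hη.ne' hT fun i => (hb i).differentiable one_ne_zero x).fderiv]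
    have hpos : 0 < ∑ k ∈ T, Real.exp (b k x / η) := Finset.sum_pos (fun i _ => Real.exp_pos _) hT
    refine norm_sum_smul_le_of_convex (fun i _ => by positivity) ?_ hC
    rw [← Finset.sum_div, div_self hpos.ne']

end LogSumExp

section Laguerre

variable {n N : ℕ} {X : Set (Euc n)} {c : Euc n → Fin N → ℝ} {φ ψ : Fin N → ℝ} {x : Euc n}

theorem mem_Lag_iff {j : Fin N} :
    x ∈ Lag X c φ j ↔ x ∈ X ∧ ∀ k, -c x k - φ k ≤ -c x j - φ j := by
  have hbdd : BddAbove (range fun k => -c x k - φ k) := (finite_range _).bddAbove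
  refine and_congr_right fun _ => ⟨fun h k => h ▸ le_ciSup hbdd k, fun h => ?_⟩
  have : Nonempty (Fin N) := ⟨j⟩
  exact le_antisymm (le_ciSup hbdd j) (ciSup_le h)

theorem exists_mem_Lag [Nonempty (Fin N)] (hx : x ∈ X) : ∃ j, x ∈ Lag X c φ j := by
  obtain ⟨j, -, hj⟩ := Finset.exists_max_image Finset.univ (fun k => -c x k - φ k)
    Finset.univ_nonempty
  exact ⟨j, mem_Lag_iff.2 ⟨hx, fun k => hj k (Finset.mem_univ k)⟩⟩

theorem measurableSet_Lag (hX : MeasurableSet X) (hc : ∀ i, Continuous (c · i)) (φ : Fin N → ℝ)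
    (j : Fin N) : MeasurableSet (Lag X c φ j) := by
  have h : Lag X c φ j = X ∩ ⋂ k, {x | -c x k - φ k ≤ -c x j - φ j} := by
    ext x; simp [mem_Lag_iff]
  rw [h]
  exact hX.inter (MeasurableSet.iInter fun k =>
    (isClosed_le (by fun_prop) (by fun_prop)).measurableSet)

theorem nonempty_Lag_of_lt_Gmap {μ : Measure (Euc n)} {ε : ℝ} {j : Fin N} (hε : 0 ≤ ε)
    (h : ε < Gmap μ X c φ j) : (Lag X c φ j).Nonempty :=
  nonempty_of_measure_ne_zero (μ := μ) fun h0 => by simp [Gmap, h0] at h; linarith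

def shiftOn (S : Finset (Fin N)) (t : ℝ) (ψ : Fin N → ℝ) : Fin N → ℝ :=
  ψ + t • ∑ i ∈ S, Pi.single i 1

variable {S : Finset (Fin N)} {t : ℝ}

theorem shiftOn_apply (k : Fin N) : shiftOn S t ψ k = ψ k + if k ∈ S then t else 0 := by
  simp [shiftOn, Finset.sum_apply, Finset.sum_pi_single]

@[simp]
theorem shiftOn_zero : shiftOn S 0 ψ = ψ := by simp [shiftOn]

theorem hasDerivAt_shiftOn : HasDerivAt (fun t => shiftOn S t ψ) (∑ i ∈ S, Pi.single i 1) t := by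
  exact (((hasDerivAt_id t).smul_const _).const_add ψ).congr_deriv (one_smul ℝ _)

theorem Lag_subset_Lag_shiftOn {j : Fin N} (hj : j ∉ S) (ht : 0 ≤ t) :
    Lag X c ψ j ⊆ Lag X c (shiftOn S t ψ) j := by
  intro x hx
  rw [mem_Lag_iff] at hx ⊢
  refine ⟨hx.1, fun k => ?_⟩
  have := hx.2 k
  simp only [shiftOn_apply, hj, if_false]
  split_ifs <;> linarith

theorem measureReal_biUnion_Lag_sdiff_le {μ : Measure (Euc n)} [IsFiniteMeasure μ]
    (hX : MeasurableSet X) (hc : ∀ i, Continuous (c · i)) (ht : 0 ≤ t) :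
    μ.real (⋃ j ∈ Sᶜ, Lag X c (shiftOn S t ψ) j \ Lag X c ψ j) ≤
      ∑ j ∈ Sᶜ, (Gmap μ X c (shiftOn S t ψ) j - Gmap μ X c ψ j) :=
  (measureReal_biUnion_finset_le _ _).trans (Finset.sum_le_sum fun j hj =>
    (measureReal_sdiff (Lag_subset_Lag_shiftOn (Finset.mem_compl.1 hj) ht)
      (measurableSet_Lag hX hc ψ j)).le)

end Laguerre

theorem norm_gradient_eq_norm_fderiv {F : Type*} [NormedAddCommGroup F] [InnerProductSpace ℝ F]
    [CompleteSpace F] (f : F → ℝ) (x : F) : ‖gradient f x‖ = ‖fderiv ℝ f x‖ := by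
  rw [gradient, LinearIsometryEquiv.norm_map]

section Separation

variable {n N : ℕ} {X : Set (Euc n)} {c : Euc n → Fin N → ℝ} {ψ : Fin N → ℝ}
  {S : Finset (Fin N)} {t a C : ℝ}

/-- `g` is a smoothing of `max_{j ∉ S} b_j - max_{i ∈ S} b_i`, where `b_k = -c(·, y_k) - ψ^k`. -/
theorem exists_contDiff_gap (hc : ∀ i, ContDiff ℝ 1 (c · i))
    (hgrad : ∀ x ∈ X, ∀ i, ‖gradient (c · i) x‖ ≤ C) (hS : S.Nonempty) (hSc : Sᶜ.Nonempty)
    (ha : 0 < a) :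
    ∃ g : Euc n → ℝ, ContDiff ℝ 1 g ∧ (∀ j ∉ S, ∀ x ∈ Lag X c ψ j, -a ≤ g x) ∧
      (∀ i ∈ S, ∀ x ∈ Lag X c (shiftOn S t ψ) i, g x ≤ -t + a) ∧
      ∀ x ∈ X, ‖fderiv ℝ g x‖ ≤ 2 * C := by
  set b : Fin N → Euc n → ℝ := fun i x => -c x i - ψ i
  have hb : ∀ i, ContDiff ℝ 1 (b i) := fun i => (hc i).neg.sub contDiff_const
  obtain ⟨gout, hgout, hout_ge, hout_le, hout_grad⟩ := exists_contDiff_smoothMax hSc hb ha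
  obtain ⟨gin, hgin, hin_ge, hin_le, hin_grad⟩ := exists_contDiff_smoothMax hS hb ha
  have hbgrad : ∀ x ∈ X, ∀ i, ‖fderiv ℝ (b i) x‖ ≤ C := fun x hx i => by
    rw [fderiv_sub_const, fderiv_fun_neg, norm_neg, ← norm_gradient_eq_norm_fderiv]
    exact hgrad x hx i
  refine ⟨fun x => gout x - gin x, hgout.sub hgin, fun j hj x hx => ?_, fun i hi x hx => ?_,
    fun x hx => ?_⟩
  · have h1 := hout_ge x j (Finset.mem_compl.2 hj)
    have h2 := hin_le x _ fun k _ => (mem_Lag_iff.1 hx).2 k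
    linarith
  · have h1 := hin_ge x i hi
    have h2 := hout_le x (b i x - t) fun k hk => by
      have := (mem_Lag_iff.1 hx).2 k
      simp only [shiftOn_apply, hi, Finset.mem_compl.1 hk, if_true, if_false] at this
      simp only [b]
      linarith
    linarith
  · rw [fderiv_fun_sub (hgout.differentiable one_ne_zero x) (hgin.differentiable one_ne_zero x)]
    refine (norm_sub_le _ _).trans ?_
    linarith [hout_grad x C fun k _ => hbgrad x hx k, hin_grad x C fun k _ => hbgrad x hx k]

theorem mem_biUnion_Lag_sdiff_of_gap [Nonempty (Fin N)] {g : Euc n → ℝ} {x : Euc n}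
    (hlow : ∀ j ∉ S, ∀ x ∈ Lag X c ψ j, -a ≤ g x)
    (hhigh : ∀ i ∈ S, ∀ x ∈ Lag X c (shiftOn S t ψ) i, g x ≤ -t + a)
    (hx : x ∈ X) (hgx : g x ∈ Ioo (-t + a) (-a)) :
    x ∈ ⋃ j ∈ Sᶜ, Lag X c (shiftOn S t ψ) j \ Lag X c ψ j := by
  obtain ⟨j, hj⟩ := exists_mem_Lag (c := c) (φ := shiftOn S t ψ) hx
  have hjS : j ∉ S := fun h => (hhigh j h x hj).not_gt hgx.1
  exact mem_iUnion₂.2 ⟨j, Finset.mem_compl.2 hjS, hj, fun h => (hlow j hjS x h).not_gt hgx.2⟩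

theorem exists_contDiff_separating (hc : ∀ i, ContDiff ℝ 1 (c · i))
    (hgrad : ∀ x ∈ X, ∀ i, ‖gradient (c · i) x‖ ≤ C) (hS : S.Nonempty) (hSc : Sᶜ.Nonempty)
    (ht : 0 < t) {κ : ℝ} (hκ : t⁻¹ < κ) :
    ∃ f : Euc n → ℝ, ContDiff ℝ 1 f ∧ (∀ x, f x ∈ Icc 0 1) ∧
      (∀ j ∉ S, EqOn f 1 (Lag X c ψ j)) ∧ (∀ i ∈ S, EqOn f 0 (Lag X c (shiftOn S t ψ) i)) ∧
      ∀ x ∈ X, ‖gradient f x‖ ≤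
        (⋃ j ∈ Sᶜ, Lag X c (shiftOn S t ψ) j \ Lag X c ψ j).indicator (fun _ => 2 * C * κ) x := by
  have hκ0 : 0 < κ := (inv_pos.2 ht).trans hκ
  have hκt : κ⁻¹ < t := by rwa [inv_lt_comm₀ hκ0 ht]
  set a := (t - κ⁻¹) / 4
  have ha4 : 4 * a = t - κ⁻¹ := by simp only [a]; ring
  have ha : 0 < a := by linarith
  have hκinv : 0 < κ⁻¹ := inv_pos.2 hκ0
  obtain ⟨g, hg, hlow, hhigh, hgrad_g⟩ := exists_contDiff_gap (ψ := ψ) (t := t) hc hgrad hS hSc ha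
  obtain ⟨θ, hθ, hθ01, hθ0, hθ1, hθ'⟩ := exists_contDiff_cutoff (l := -t + a) (r := -a) (κ := κ)
    (by linarith) (by rw [inv_lt_comm₀ (by linarith) hκ0]; linarith)
  have : Nonempty (Fin N) := ⟨hS.choose⟩
  refine ⟨θ ∘ g, hθ.comp hg, fun x => hθ01 _, fun j hj x hx => hθ1 _ (hlow j hj x hx),
    fun i hi x hx => hθ0 _ (hhigh i hi x hx), fun x hx => ?_⟩
  have hchain : fderiv ℝ (θ ∘ g) x = deriv θ (g x) • fderiv ℝ g x :=
    ((hθ.differentiable one_ne_zero _).hasDerivAt.comp_hasFDerivAt x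
      (hg.differentiable one_ne_zero x).hasFDerivAt).fderiv
  rw [norm_gradient_eq_norm_fderiv, hchain, norm_smul, Real.norm_eq_abs]
  have hθgx := hθ' (g x)
  by_cases hgx : g x ∈ Ioo (-t + a) (-a)
  · rw [indicator_of_mem (mem_biUnion_Lag_sdiff_of_gap hlow hhigh hx hgx)]
    rw [indicator_of_mem hgx] at hθgx
    calc |deriv θ (g x)| * ‖fderiv ℝ g x‖ ≤ κ * (2 * C) :=
          mul_le_mul hθgx (hgrad_g x hx) (norm_nonneg _) hκ0.le
      _ = 2 * C * κ := by ring
  · have hC : 0 ≤ C := (norm_nonneg _).trans (hgrad x hx hS.choose)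
    rw [indicator_of_notMem hgx, abs_nonpos_iff] at hθgx
    rw [hθgx, abs_zero, zero_mul]
    exact indicator_nonneg (fun _ _ => by positivity) x

end Separation

theorem two_rpow_one_sub_le_rpow_add_rpow {q m : ℝ} (hq : 1 ≤ q) (hm0 : 0 ≤ m) (hm1 : m ≤ 1) :
    (2 : ℝ) ^ (1 - q) ≤ (1 - m) ^ q + m ^ q := by
  have h := (convexOn_rpow hq).2 (mem_Ici.2 (sub_nonneg.2 hm1)) (mem_Ici.2 hm0)
    (by norm_num : (0 : ℝ) ≤ 1 / 2) (by norm_num : (0 : ℝ) ≤ 1 / 2) (by norm_num)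
  have hhalf : (1 / 2 : ℝ) • (1 - m) + (1 / 2 : ℝ) • m = 2⁻¹ := by simp only [smul_eq_mul]; ring
  dsimp only at h
  rw [hhalf, smul_eq_mul, smul_eq_mul, Real.inv_rpow zero_le_two, ← Real.rpow_neg zero_le_two] at h
  rw [sub_eq_add_neg, Real.rpow_add zero_lt_two, Real.rpow_one]
  linarith

theorem integral_norm_le_of_le_indicator {α E : Type*} [MeasurableSpace α] [NormedAddCommGroup E]
    {μ : Measure α} [IsFiniteMeasure μ] {X B : Set α} {F : α → E} {L : ℝ} (hμX : μ Xᶜ = 0)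
    (hB : MeasurableSet B) (hF : ∀ x ∈ X, ‖F x‖ ≤ B.indicator (fun _ => L) x) :
    ∫ x, ‖F x‖ ∂μ ≤ μ.real B * L := by
  rw [← smul_eq_mul, ← integral_indicator_const L hB]
  exact integral_mono_of_nonneg (.of_forall fun x => norm_nonneg _)
    ((integrable_const L).indicator hB) (Filter.mem_of_superset (mem_ae_iff.2 hμX) hF)

section PoincareWirtinger

variable {n : ℕ} {μ : Measure (Euc n)} [IsProbabilityMeasure μ] {f : Euc n → ℝ}
  {A B : Set (Euc n)} {q ε : ℝ}

theorem mul_two_rpow_le_integral_abs_sub_rpow (hq : 1 ≤ q) (hε : 0 ≤ ε) (hf : Continuous f)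
    (hf01 : ∀ x, f x ∈ Icc 0 1) (hA : MeasurableSet A) (hB : MeasurableSet B)
    (hfA : EqOn f 1 A) (hfB : EqOn f 0 B) (hεA : ε ≤ μ.real A) (hεB : ε ≤ μ.real B) {m : ℝ}
    (hm : m ∈ Icc 0 1) : ε * 2 ^ (1 - q) ≤ ∫ x, |f x - m| ^ q ∂μ := by
  have hq0 : 0 < q := zero_lt_one.trans_le hq
  have hdisj : Disjoint A B :=
    disjoint_left.2 fun x hxA hxB => one_ne_zero ((hfA hxA).symm.trans (hfB hxB))
  have hint : Integrable (fun x => |f x - m| ^ q) μ := by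
    have hcont : Continuous fun x => |f x - m| ^ q :=
      (hf.sub continuous_const).abs.rpow_const fun _ => Or.inr hq0.le
    refine .of_bound hcont.aestronglyMeasurable 1 (.of_forall fun x => ?_)
    rw [Real.norm_of_nonneg (by positivity)]
    refine Real.rpow_le_one (abs_nonneg _) ?_ hq0.le
    rw [abs_le]
    constructor <;> linarith [(hf01 x).1, (hf01 x).2, hm.1, hm.2]
  have hsetA : ∫ x in A, |f x - m| ^ q ∂μ = μ.real A * (1 - m) ^ q := by
    rw [setIntegral_congr_fun hA fun x hx => by rw [hfA hx, Pi.one_apply,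
      abs_of_nonneg (sub_nonneg.2 hm.2)], setIntegral_const, smul_eq_mul]
  have hsetB : ∫ x in B, |f x - m| ^ q ∂μ = μ.real B * m ^ q := by
    rw [setIntegral_congr_fun hB fun x hx => by rw [hfB hx, Pi.zero_apply, zero_sub, abs_neg,
      abs_of_nonneg hm.1], setIntegral_const, smul_eq_mul]
  have hpA : 0 ≤ (1 - m) ^ q := Real.rpow_nonneg (sub_nonneg.2 hm.2) q
  have hpB : 0 ≤ m ^ q := Real.rpow_nonneg hm.1 q
  calc ε * 2 ^ (1 - q) ≤ ε * (1 - m) ^ q + ε * m ^ q := by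
        rw [← mul_add]
        exact mul_le_mul_of_nonneg_left (two_rpow_one_sub_le_rpow_add_rpow hq hm.1 hm.2) hε
    _ ≤ μ.real A * (1 - m) ^ q + μ.real B * m ^ q := by gcongr
    _ = ∫ x in A ∪ B, |f x - m| ^ q ∂μ := by
        rw [setIntegral_union hdisj hB hint.integrableOn hint.integrableOn, hsetA, hsetB]
    _ ≤ ∫ x, |f x - m| ^ q ∂μ :=
        setIntegral_le_integral hint (.of_forall fun x => by positivity)

theorem PWIneq.rpow_le_mul_integral_norm_gradient {CPW : ℝ} (hPW : PWIneq μ q CPW) (hq : 1 ≤ q)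
    (hε : 0 ≤ ε) (hf : ContDiff ℝ 1 f) (hf01 : ∀ x, f x ∈ Icc 0 1) (hA : MeasurableSet A)
    (hB : MeasurableSet B) (hfA : EqOn f 1 A) (hfB : EqOn f 0 B) (hεA : ε ≤ μ.real A)
    (hεB : ε ≤ μ.real B) :
    ε ^ (1 / q) * 2 ^ (1 / q - 1) ≤ CPW * ∫ x, ‖gradient f x‖ ∂μ := by
  have hq0 : 0 < q := zero_lt_one.trans_le hq
  have hm : ∫ x, f x ∂μ ∈ Icc 0 1 := by
    refine ⟨integral_nonneg fun x => (hf01 x).1, ?_⟩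
    calc ∫ x, f x ∂μ ≤ ∫ _, (1 : ℝ) ∂μ := integral_mono_of_nonneg (.of_forall fun x => (hf01 x).1)
          (integrable_const 1) (.of_forall fun x => (hf01 x).2)
      _ = 1 := by simp
  have h := mul_two_rpow_le_integral_abs_sub_rpow hq hε hf.continuous hf01 hA hB hfA hfB hεA hεB hm
  calc ε ^ (1 / q) * 2 ^ (1 / q - 1) = (ε * 2 ^ (1 - q)) ^ (1 / q) := by
        rw [Real.mul_rpow hε (by positivity), ← Real.rpow_mul zero_le_two]
        congr 2
        field_simp
    _ ≤ (∫ x, |f x - ∫ z, f z ∂μ| ^ q ∂μ) ^ (1 / q) :=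
        Real.rpow_le_rpow (by positivity) h (by positivity)
    _ ≤ CPW * ∫ x, ‖gradient f x‖ ∂μ := hPW f hf

end PoincareWirtinger

section Derivative

variable {n N : ℕ} {X : Set (Euc n)} {c : Euc n → Fin N → ℝ} {ψ : Fin N → ℝ}
  {S : Finset (Fin N)} {μ : Measure (Euc n)} [IsProbabilityMeasure μ] {q CPW C ε : ℝ}

theorem rpow_mul_le_sum_Gmap_shiftOn_sub (hμX : μ Xᶜ = 0) (hX : MeasurableSet X)
    (hc : ∀ i, ContDiff ℝ 1 (c · i)) (hgrad : ∀ x ∈ X, ∀ i, ‖gradient (c · i) x‖ ≤ C)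
    (hC : 0 ≤ C) (hq : 1 ≤ q) (hCPW : 0 ≤ CPW) (hPW : PWIneq μ q CPW) (hε : 0 ≤ ε)
    {i₀ j₀ : Fin N} (hi₀ : i₀ ∈ S) (hj₀ : j₀ ∉ S) {t : ℝ} (ht : 0 < t)
    (hj₀ε : ε < Gmap μ X c ψ j₀) (hi₀ε : ε < Gmap μ X c (shiftOn S t ψ) i₀) :
    ε ^ (1 / q) * 2 ^ (1 / q - 1) * t ≤
      2 * CPW * C * ∑ j ∈ Sᶜ, (Gmap μ X c (shiftOn S t ψ) j - Gmap μ X c ψ j) := by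
  set M := 2 * CPW * C * ∑ j ∈ Sᶜ, (Gmap μ X c (shiftOn S t ψ) j - Gmap μ X c ψ j)
  have hc' : ∀ i, Continuous (c · i) := fun i => (hc i).continuous
  have hle : ∀ κ, t⁻¹ < κ → ε ^ (1 / q) * 2 ^ (1 / q - 1) ≤ M * κ := by
    intro κ hκ
    have hκ0 : 0 < κ := (inv_pos.2 ht).trans hκ
    obtain ⟨f, hf, hf01, hf1, hf0, hfgrad⟩ := exists_contDiff_separating (ψ := ψ) hc hgrad
      ⟨i₀, hi₀⟩ ⟨j₀, Finset.mem_compl.2 hj₀⟩ ht hκ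
    have hband : MeasurableSet (⋃ j ∈ Sᶜ, Lag X c (shiftOn S t ψ) j \ Lag X c ψ j) :=
      Finset.measurableSet_biUnion _ fun j _ =>
        (measurableSet_Lag hX hc' _ j).diff (measurableSet_Lag hX hc' ψ j)
    calc ε ^ (1 / q) * 2 ^ (1 / q - 1) ≤ CPW * ∫ x, ‖gradient f x‖ ∂μ :=
          PWIneq.rpow_le_mul_integral_norm_gradient hPW hq hε hf hf01
            (measurableSet_Lag hX hc' ψ j₀) (measurableSet_Lag hX hc' _ i₀) (hf1 j₀ hj₀)
            (hf0 i₀ hi₀) hj₀ε.le hi₀ε.le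
      _ ≤ CPW * (μ.real (⋃ j ∈ Sᶜ, Lag X c (shiftOn S t ψ) j \ Lag X c ψ j) * (2 * C * κ)) :=
          mul_le_mul_of_nonneg_left (integral_norm_le_of_le_indicator hμX hband hfgrad) hCPW
      _ ≤ CPW * ((∑ j ∈ Sᶜ, (Gmap μ X c (shiftOn S t ψ) j - Gmap μ X c ψ j)) * (2 * C * κ)) := by
          gcongr
          exact measureReal_biUnion_Lag_sdiff_le hX hc' ht.le
      _ = M * κ := by ring
  have hlim : Tendsto (fun κ => M * κ) (𝓝[>] t⁻¹) (𝓝 (M * t⁻¹)) :=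
    ((continuous_const_mul M).tendsto _).mono_left nhdsWithin_le_nhds
  have h := ge_of_tendsto hlim (eventually_nhdsWithin_of_forall hle)
  rwa [← div_eq_mul_inv, le_div_iff₀ ht] at h

theorem le_of_hasDerivAt_of_eventually_mul_le {F : ℝ → ℝ} {D K x : ℝ} (hF : HasDerivAt F D x)
    (h : ∀ᶠ s in 𝓝[>] 0, K * s ≤ F (x + s) - F x) : K ≤ D := by
  refine ge_of_tendsto hF.tendsto_slope_zero_right ?_
  filter_upwards [h, self_mem_nhdsWithin] with s hs hs0
  rw [smul_eq_mul, le_inv_mul_iff₀ hs0, mul_comm]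
  exact hs

theorem rpow_mul_le_sum_sum_fderiv_Gmap (hμX : μ Xᶜ = 0) (hX : MeasurableSet X)
    (hc : ∀ i, ContDiff ℝ 1 (c · i)) (hgrad : ∀ x ∈ X, ∀ i, ‖gradient (c · i) x‖ ≤ C)
    (hC : 0 ≤ C) (hq : 1 ≤ q) (hCPW : 0 ≤ CPW) (hPW : PWIneq μ q CPW) (hε : 0 ≤ ε)
    (hψ : ∀ i, ε < Gmap μ X c ψ i) (hdiff : ∀ j, DifferentiableAt ℝ (fun φ => Gmap μ X c φ j) ψ)
    (hS : S.Nonempty) (hSc : Sᶜ.Nonempty) :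
    ε ^ (1 / q) * 2 ^ (1 / q - 1) ≤ 2 * CPW * C *
      ∑ j ∈ Sᶜ, ∑ i ∈ S, fderiv ℝ (fun φ => Gmap μ X c φ j) ψ (Pi.single i 1) := by
  obtain ⟨i₀, hi₀⟩ := hS
  obtain ⟨j₀, hj₀⟩ := hSc
  have hline : ∀ j, HasDerivAt (fun s => Gmap μ X c (shiftOn S s ψ) j)
      (fderiv ℝ (fun φ => Gmap μ X c φ j) ψ (∑ i ∈ S, Pi.single i 1)) 0 := fun j =>
    (hdiff j).hasFDerivAt.comp_hasDerivAt_of_eq 0 hasDerivAt_shiftOn shiftOn_zero.symm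
  have hF := (HasDerivAt.fun_sum fun j (_ : j ∈ Sᶜ) => hline j).const_mul (2 * CPW * C)
  simp only [map_sum] at hF
  refine le_of_hasDerivAt_of_eventually_mul_le hF ?_
  have hcell : ∀ᶠ s in 𝓝[>] (0 : ℝ), ε < Gmap μ X c (shiftOn S s ψ) i₀ :=
    nhdsWithin_le_nhds ((hline i₀).continuousAt.tendsto.eventually_const_lt (by simpa using hψ i₀))
  filter_upwards [hcell, self_mem_nhdsWithin] with s hs hs0
  simp only [zero_add, shiftOn_zero, ← mul_sub, ← Finset.sum_sub_distrib]
  exact rpow_mul_le_sum_Gmap_shiftOn_sub hμX hX hc hgrad hC hq hCPW hPW hε hi₀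
    (Finset.mem_compl.1 hj₀) hs0 (hψ j₀) hs

end Derivative

theorem withDensity_ofReal_compl_eq_zero {α : Type*} [MeasurableSpace α] {ν : Measure α}
    {X : Set α} {ρ : α → ℝ} (hX : MeasurableSet X) (hρ0 : ∀ x ∉ X, ρ x = 0) :
    ν.withDensity (fun x => ENNReal.ofReal (ρ x)) Xᶜ = 0 := by
  rw [withDensity_apply _ hX.compl]
  exact (setLIntegral_congr_fun hX.compl fun x hx => by simp [hρ0 x hx]).trans lintegral_zero

theorem two_mul_mul_threshold_le {q ε C CPW a b N : ℝ} (hq1 : 1 ≤ q) (hq2 : q ≤ 2) (hε : 0 ≤ ε)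
    (hC : 0 < C) (hCPW : 0 < CPW) (hab : a + b = N) (hN : 0 < N) :
    2 * CPW * C * (b * (a * ((2 : ℝ) ^ (1 - 1 / q) * ε ^ (1 / q) / (C * N ^ 2 * CPW)))) ≤
      ε ^ (1 / q) * 2 ^ (1 / q - 1) := by
  have hq0 : 0 < q := zero_lt_one.trans_le hq1
  have hcard : b * a ≤ N ^ 2 / 4 := by nlinarith [sq_nonneg (a - b)]
  have hpow : (2 : ℝ) ^ (1 - 1 / q) ≤ 2 ^ (1 / q - 1) * 2 := by
    rw [← Real.rpow_add_one two_ne_zero]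
    refine Real.rpow_le_rpow_of_exponent_le one_le_two ?_
    have : 1 / 2 ≤ 1 / q := one_div_le_one_div_of_le hq0 hq2
    linarith
  calc 2 * CPW * C * (b * (a * ((2 : ℝ) ^ (1 - 1 / q) * ε ^ (1 / q) / (C * N ^ 2 * CPW))))
      = b * a * (2 * 2 ^ (1 - 1 / q) * ε ^ (1 / q) / N ^ 2) := by field_simp
    _ ≤ N ^ 2 / 4 * (2 * 2 ^ (1 - 1 / q) * ε ^ (1 / q) / N ^ 2) := by gcongr
    _ = 2 ^ (1 - 1 / q) / 2 * ε ^ (1 / q) := by field_simp; ring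
    _ ≤ ε ^ (1 / q) * 2 ^ (1 / q - 1) := by
        rw [mul_comm (ε ^ (1 / q))]
        gcongr
        linarith

end SemiDiscreteOT

theorem stmt14_general {n N : ℕ} (hN : 0 < N)
    (X : Set (Euc n)) (hXcpt : IsCompact X)
    (c : Euc n → Fin N → ℝ) (hreg : Reg c)
    (ρ : Euc n → ℝ) (hρ0 : ∀ x ∉ X, ρ x = 0)
    (μ : Measure (Euc n)) [IsProbabilityMeasure μ]
    (hμ : μ = volume.withDensity fun x => ENNReal.ofReal (ρ x))
    (q CPW : ℝ) (hq1 : 1 ≤ q) (hq2 : q ≤ 2) (hCPW : 0 < CPW) (hPW : PWIneq μ q CPW)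
    (Cgrad : ℝ) (hCgrad : ∀ x ∈ X, ∀ i, ‖gradient (fun z => c z i) x‖ ≤ Cgrad)
    (ε : ℝ) (hε : 0 < ε)
    (ψ : Fin N → ℝ) (hψ : ∀ i, ε < Gmap μ X c ψ i)
    (hdiff : ∀ j, DifferentiableAt ℝ (fun φ => Gmap μ X c φ j) ψ) :
    (SimpleGraph.fromRel fun i j : Fin N =>
      (2 : ℝ) ^ (1 - 1 / q) * ε ^ (1 / q) / (Cgrad * N ^ 2 * CPW) ≤
        fderiv ℝ (fun φ => Gmap μ X c φ j) ψ (Pi.single i 1)).Connected := by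
  have : Nonempty (Fin N) := ⟨⟨0, hN⟩⟩
  refine ⟨?_⟩
  by_contra hpre
  obtain ⟨S, hS, hSc, hcut⟩ := SimpleGraph.exists_finset_cut_of_not_preconnected hpre
  have hXm := hXcpt.isClosed.measurableSet
  have hμX : μ Xᶜ = 0 := hμ ▸ SemiDiscreteOT.withDensity_ofReal_compl_eq_zero hXm hρ0
  obtain ⟨x, hx⟩ := SemiDiscreteOT.nonempty_Lag_of_lt_Gmap hε.le (hψ ⟨0, hN⟩)
  have hC : 0 ≤ Cgrad := (norm_nonneg _).trans (hCgrad x hx.1 ⟨0, hN⟩)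
  have key := SemiDiscreteOT.rpow_mul_le_sum_sum_fderiv_Gmap hμX hXm
    (fun i => (hreg i).of_le one_le_two) hCgrad hC hq1 hCPW.le hPW hε.le hψ hdiff hS hSc
  have hK : 0 < ε ^ (1 / q) * 2 ^ (1 / q - 1) := by positivity
  obtain hC0 | hC0 := hC.eq_or_lt
  · rw [← hC0, mul_zero, zero_mul] at key
    linarith
  have hcross := Finset.sum_lt_sum_of_nonempty hSc fun j hj => Finset.sum_lt_sum_of_nonempty hS
    fun i hi => lt_of_not_ge fun h => hcut i hi j (Finset.mem_compl.1 hj)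
      ((SimpleGraph.fromRel_adj _ _ _).2 ⟨ne_of_mem_of_not_mem hi (Finset.mem_compl.1 hj), .inl h⟩)
  simp only [Finset.sum_const, nsmul_eq_mul] at hcross
  have hcard : (S.card : ℝ) + Sᶜ.card = N := by
    exact_mod_cast S.card_add_card_compl.trans (Fintype.card_fin N)
  have hthreshold := SemiDiscreteOT.two_mul_mul_threshold_le hq1 hq2 hε.le hC0 hCPW hcard
    (by exact_mod_cast hN)
  linarith [mul_lt_mul_of_pos_left hcross (by positivity : 0 < 2 * CPW * Cgrad)]

/-- **Proposition 4.4: the weighted Laguerre-cell graph is connected through edges of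
weight at least `2^(1-1/q) ε^(1/q) / (C_∇ N² C_PW)`.** -/
theorem stmt14 {n N : ℕ} (hn : 2 ≤ n) (hN : 0 < N)
    (X : Set (Euc n)) (hXcpt : IsCompact X) (hXlip : HasLipschitzBoundary X)
    (c : Euc n → Fin N → ℝ) (hreg : Reg c) (htwist : Twist X c)
    (ρ : Euc n → ℝ) (hρcont : ContinuousOn ρ X) (hρ0 : ∀ x ∉ X, ρ x = 0)
    (hρnn : ∀ x, 0 ≤ ρ x)
    (μ : Measure (Euc n)) [IsProbabilityMeasure μ]
    (hμ : μ = volume.withDensity fun x => ENNReal.ofReal (ρ x))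
    (q CPW : ℝ) (hq1 : 1 ≤ q) (hq2 : q ≤ 2) (hCPW : 0 < CPW) (hPW : PWIneq μ q CPW)
    (Cgrad : ℝ) (hCgrad : ∀ x ∈ X, ∀ i, ‖gradient (fun z => c z i) x‖ ≤ Cgrad)
    (ε : ℝ) (hε : 0 < ε)
    (ψ : Fin N → ℝ) (hψ : ∀ i, ε < Gmap μ X c ψ i)
    (hdiff : ∀ j, DifferentiableAt ℝ (fun φ => Gmap μ X c φ j) ψ)
    (hder : ∀ i j : Fin N, i ≠ j →
      fderiv ℝ (fun φ => Gmap μ X c φ j) ψ (Pi.single i 1) =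
        ∫ x in Lag X c ψ i ∩ Lag X c ψ j,
          ρ x / ‖gradient (fun z => c z i) x - gradient (fun z => c z j) x‖
            ∂(μH[(n : ℝ) - 1])) :
    (SimpleGraph.fromRel fun i j : Fin N =>
      (2 : ℝ) ^ (1 - 1 / q) * ε ^ (1 / q) / (Cgrad * N ^ 2 * CPW) ≤
        fderiv ℝ (fun φ => Gmap μ X c φ j) ψ (Pi.single i 1)).Connected :=
  stmt14_general hN X hXcpt c hreg ρ hρ0 μ hμ q CPW hq1 hq2 hCPW hPW Cgrad hCgrad ε hε ψ hψ hdiff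
end
end

section
/- Let n ≥ 2 and let A ⊂ ℝⁿ be a bounded convex set with ℒ(A) > 0. Then A contains a closed ball of radius 2^{n−1} ℒ(A) / (ω_n (n+2)^n diam(A)^{n−1}). -/
open MeasureTheory Metric Set Filter Bornology
open scoped RealInnerProductSpace ENNReal NNReal Topology symmDiff

noncomputable section

/-!
Let `K` be the closure of `A` (same volume and diameter) and `b` its centroid. Fix a unit
vector `u` with `⟪u, ·⟫ ≤ c` on `K`, and let `p ∈ K` minimise `⟪u, ·⟫`. The homothety of ratio
`τ` about `p` maps `K` into `{x ∈ K | c - ⟪u, x⟫ ≥ (1 - τ) (c - ⟪u, p⟫)}`, so the layer-cake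
formula gives `c - ⟪u, b⟫ ≥ (c - ⟪u, p⟫) / (n + 1)`. On the other hand `K` lies in a slab of
width `c - ⟪u, p⟫` and in a ball of radius `diam K`, so `vol K ≤ (c - ⟪u, p⟫) (2 diam K)^(n-1)`.
Hence every half-space containing `K` contains the ball around `b` of radius
`vol K / ((n + 1) (2 diam K)^(n-1))`, and by separation this open ball lies in `K`, hence in
`interior K = interior A`. The radius of the statement is smaller, because the cube inscribed
in the unit ball gives `ω_n ≥ (2 / √n)^n` and thus `4^(n-1) (n + 1) < ω_n (n + 2)^n`.
-/

section Convex

variable {E : Type*} [NormedAddCommGroup E] [NormedSpace ℝ E] [MeasurableSpace E] [BorelSpace E]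
  [FiniteDimensional ℝ E] (μ : Measure E) [μ.IsAddHaarMeasure] {s : Set E}

theorem Convex.addHaar_closure (hs : Convex ℝ s) : μ (closure s) = μ s := by
  refine le_antisymm ?_ (measure_mono subset_closure)
  rw [closure_eq_self_union_frontier]
  exact (measure_union_le _ _).trans (by rw [hs.addHaar_frontier μ, add_zero])

theorem Convex.interior_nonempty_of_addHaar_ne_zero (hs : Convex ℝ s) (h : μ s ≠ 0) :
    (interior s).Nonempty := by
  rw [hs.interior_nonempty_iff_affineSpan_eq_top]
  by_contra hspan
  exact h (measure_mono_null (subset_affineSpan ℝ s) (Measure.addHaar_affineSubspace μ _ hspan))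

end Convex

theorem exists_unit_inner_le_lt_of_notMem {E : Type*} [NormedAddCommGroup E]
    [InnerProductSpace ℝ E] [CompleteSpace E] {K : Set E} (hK : Convex ℝ K) (hKc : IsClosed K)
    (hKne : K.Nonempty) {p : E} (hp : p ∉ K) :
    ∃ u : E, ‖u‖ = 1 ∧ ∃ c, (∀ x ∈ K, ⟪u, x⟫ ≤ c) ∧ c < ⟪u, p⟫ := by
  obtain ⟨f, s, hfK, hfp⟩ := geometric_hahn_banach_closed_point hK hKc hp
  set v := (InnerProductSpace.toDual ℝ E).symm f
  have hv : ∀ x, ⟪v, x⟫ = f x := fun x => InnerProductSpace.toDual_symm_apply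
  have hv₀ : 0 < ‖v‖ := by
    obtain ⟨x, hx⟩ := hKne
    refine norm_pos_iff.2 fun h => ?_
    have := (hfK x hx).trans hfp
    rw [← hv, ← hv, h, inner_zero_left, inner_zero_left] at this
    exact lt_irrefl 0 this
  refine ⟨‖v‖⁻¹ • v, by rw [norm_smul, norm_inv, norm_norm, inv_mul_cancel₀ hv₀.ne'],
    ‖v‖⁻¹ * s, fun x hx => ?_, ?_⟩
  · rw [real_inner_smul_left, hv]
    exact mul_le_mul_of_nonneg_left (hfK x hx).le (by positivity)
  · rw [real_inner_smul_left, hv]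
    exact mul_lt_mul_of_pos_left hfp (by positivity)

theorem volume_le_of_subset_slab {n : ℕ} (hn : 0 < n) {K : Set (Euc n)} {u a : Euc n}
    (hu : ‖u‖ = 1) {D m M : ℝ} (hdist : ∀ x ∈ K, dist x a ≤ D)
    (hslab : ∀ x ∈ K, ⟪u, x⟫ ∈ Icc m M) :
    volume K ≤ ENNReal.ofReal (M - m) * ENNReal.ofReal (2 * D) ^ (n - 1) := by
  classical
  let i₀ : Fin n := ⟨0, hn⟩
  have hu' : Orthonormal ℝ (({i₀} : Set (Fin n)).domRestrict fun _ => u) :=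
    ⟨fun _ => hu, fun i j hij => absurd (Subsingleton.elim i j) hij⟩
  obtain ⟨b, hb⟩ := hu'.exists_orthonormalBasis_extension_of_card_eq (by simp)
  let box : Set (Fin n → ℝ) := univ.pi fun i =>
    if i = i₀ then Icc m M else Icc (⟪b i, a⟫ - D) (⟪b i, a⟫ + D)
  let T : Euc n → Fin n → ℝ := (MeasurableEquiv.toLp 2 (Fin n → ℝ)).symm ∘ b.repr
  have hT : MeasurePreserving T volume volume :=
    (EuclideanSpace.volume_preserving_symm_measurableEquiv_toLp _).comp b.measurePreserving_repr
  have hKbox : K ⊆ T ⁻¹' box := by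
    intro x hx i _
    have hTx : T x i = ⟪b i, x⟫ := b.repr_apply_apply x i
    by_cases hi : i = i₀
    · subst hi
      simpa [hTx, hb i₀ rfl] using hslab x hx
    · have : |⟪b i, x⟫ - ⟪b i, a⟫| ≤ D := by
        rw [← inner_sub_right]
        calc |⟪b i, x - a⟫| ≤ ‖b i‖ * ‖x - a‖ := abs_real_inner_le_norm _ _
          _ ≤ D := by rw [b.orthonormal.1 i, one_mul, ← dist_eq_norm]; exact hdist x hx
      simp only [hi, if_false, hTx, mem_Icc]
      constructor <;> linarith [abs_le.mp this]
  calc volume K ≤ volume (T ⁻¹' box) := measure_mono hKbox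
    _ = volume box := hT.measure_preimage
      (MeasurableSet.univ_pi fun i => by split_ifs <;> exact measurableSet_Icc).nullMeasurableSet
    _ = ENNReal.ofReal (M - m) * ENNReal.ofReal (2 * D) ^ (n - 1) := by
      have hside : ∀ i ∈ Finset.univ.erase i₀,
          volume (if i = i₀ then Icc m M else Icc (⟪b i, a⟫ - D) (⟪b i, a⟫ + D)) =
            ENNReal.ofReal (2 * D) := by
        intro i hi
        rw [if_neg (Finset.ne_of_mem_erase hi), Real.volume_Icc]
        ring_nf
      rw [volume_pi_pi, ← Finset.mul_prod_erase _ _ (Finset.mem_univ i₀),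
        Finset.prod_congr rfl hside, Finset.prod_const, Finset.card_erase_of_mem
        (Finset.mem_univ i₀), if_pos rfl, Real.volume_Icc, Finset.card_univ, Fintype.card_fin]

theorem integral_one_sub_div_pow {w : ℝ} (hw : w ≠ 0) (n : ℕ) :
    ∫ t in (0 : ℝ)..w, (1 - t / w) ^ n = w / (n + 1) := by
  rw [intervalIntegral.integral_comp_div (fun s => (1 - s) ^ n) hw,
    intervalIntegral.integral_comp_sub_left (fun s => s ^ n)]
  simp [integral_pow, hw]
  ring

def centroid {n : ℕ} (K : Set (Euc n)) : Euc n := (volume K).toReal⁻¹ • ∫ x in K, x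

section Centroid

variable {n : ℕ} {K : Set (Euc n)} {u p : Euc n} {M : ℝ}

theorem ofReal_pow_mul_volume_le_volume_superlevel (hK : Convex ℝ K) (hp : p ∈ K)
    (hM : ∀ x ∈ K, ⟪u, x⟫ ≤ M) {τ : ℝ} (hτ₀ : 0 ≤ τ) (hτ₁ : τ ≤ 1) :
    ENNReal.ofReal (τ ^ n) * volume K ≤
      volume ({x | (1 - τ) * (M - ⟪u, p⟫) ≤ M - ⟪u, x⟫} ∩ K) := by
  have hsub : AffineMap.homothety p τ '' K ⊆
      {x | (1 - τ) * (M - ⟪u, p⟫) ≤ M - ⟪u, x⟫} ∩ K := by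
    rintro _ ⟨x, hx, rfl⟩
    have hhom : AffineMap.homothety p τ x = τ • x + (1 - τ) • p := by
      simp only [AffineMap.homothety_apply, vsub_eq_sub, vadd_eq_add]
      module
    rw [hhom]
    refine ⟨?_, hK hx hp hτ₀ (by linarith) (by ring)⟩
    simp only [mem_ofPred_eq, inner_add_right, real_inner_smul_right]
    nlinarith [hM x hx]
  calc ENNReal.ofReal (τ ^ n) * volume K = volume (AffineMap.homothety p τ '' K) := by
        rw [Measure.addHaar_image_homothety, finrank_euclideanSpace_fin,
          abs_of_nonneg (pow_nonneg hτ₀ n)]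
    _ ≤ _ := measure_mono hsub

theorem ofReal_mul_volume_le_lintegral_sub_inner (hK : Convex ℝ K) (hp : p ∈ K)
    (hM : ∀ x ∈ K, ⟪u, x⟫ ≤ M) :
    ENNReal.ofReal ((M - ⟪u, p⟫) / (n + 1)) * volume K ≤
      ∫⁻ x in K, ENNReal.ofReal (M - ⟪u, x⟫) := by
  rcases (sub_nonneg.2 (hM p hp)).eq_or_lt with hw | hw
  · simp [← hw]
  set w := M - ⟪u, p⟫
  have hg : Continuous fun x : Euc n => M - ⟪u, x⟫ := by fun_prop
  have hpow : Continuous fun t : ℝ => (1 - t / w) ^ n := by fun_prop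
  have htail : Measurable fun t : ℝ => volume.restrict K {x | t ≤ M - ⟪u, x⟫} :=
    Antitone.measurable fun s t hst => measure_mono fun x hx => hst.trans hx
  calc ENNReal.ofReal (w / (n + 1)) * volume K
      = ∫⁻ t in Ioo 0 w, ENNReal.ofReal ((1 - t / w) ^ n) * volume K := by
        rw [lintegral_mul_const _ (by fun_prop), ← ofReal_integral_eq_lintegral_ofReal,
          ← integral_Ioc_eq_integral_Ioo, ← intervalIntegral.integral_of_le hw.le,
          integral_one_sub_div_pow hw.ne']
        · exact hpow.integrableOn_Icc.mono_set Ioo_subset_Icc_self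
        · filter_upwards [ae_restrict_mem measurableSet_Ioo] with t ht
          have : t / w ≤ 1 := (div_le_one hw).2 ht.2.le
          exact pow_nonneg (by linarith) n
    _ ≤ ∫⁻ t in Ioo 0 w, volume.restrict K {x | t ≤ M - ⟪u, x⟫} := by
        refine setLIntegral_mono htail fun t ht => ?_
        have : t / w ≤ 1 := (div_le_one hw).2 ht.2.le
        rw [Measure.restrict_apply (measurableSet_le measurable_const hg.measurable)]
        have key := ofReal_pow_mul_volume_le_volume_superlevel hK hp hM (τ := 1 - t / w)
          (by linarith) (by linarith [div_pos ht.1 hw])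
        rwa [show (1 - (1 - t / w)) * w = t by field_simp; ring] at key
    _ ≤ ∫⁻ t in Ioi 0, volume.restrict K {x | t ≤ M - ⟪u, x⟫} :=
        lintegral_mono_set Ioo_subset_Ioi_self
    _ = ∫⁻ x in K, ENNReal.ofReal (M - ⟪u, x⟫) :=
        (lintegral_eq_lintegral_meas_le _
          ((ae_restrict_iff'₀ (hK.nullMeasurableSet (μ := volume))).2
            (ae_of_all _ fun x hx => sub_nonneg.2 (hM x hx))) hg.aemeasurable).symm

theorem inner_centroid_add_le (hK : Convex ℝ K) (hKc : IsCompact K) (hV : volume K ≠ 0)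
    (hp : p ∈ K) (hM : ∀ x ∈ K, ⟪u, x⟫ ≤ M) :
    ⟪u, centroid K⟫ + (M - ⟪u, p⟫) / (n + 1) ≤ M := by
  set V := (volume K).toReal with hVdef
  have hV₀ : 0 < V := ENNReal.toReal_pos hV hKc.measure_lt_top.ne
  have hid : IntegrableOn (fun x : Euc n => x) K := continuousOn_id.integrableOn_compact hKc
  have hg : IntegrableOn (fun x : Euc n => M - ⟪u, x⟫) K :=
    (integrableOn_const (C := M) hKc.measure_lt_top.ne).sub (hid.const_inner u)
  have hg₀ : 0 ≤ ∫ x in K, (M - ⟪u, x⟫) :=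
    setIntegral_nonneg hKc.isClosed.measurableSet fun x hx => sub_nonneg.2 (hM x hx)
  have hint : ∫ x in K, (M - ⟪u, x⟫) = V * (M - ⟪u, centroid K⟫) := by
    rw [integral_sub (integrableOn_const (C := M) hKc.measure_lt_top.ne) (hid.const_inner u),
      setIntegral_const, integral_inner hid, centroid, real_inner_smul_right, smul_eq_mul,
      measureReal_def, ← hVdef]
    field_simp
  have hlow : (M - ⟪u, p⟫) / (n + 1) * V ≤ V * (M - ⟪u, centroid K⟫) := by
    rw [← hint, ← ENNReal.ofReal_le_ofReal_iff hg₀, ofReal_integral_eq_lintegral_ofReal hg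
      ((ae_restrict_iff'₀ (hK.nullMeasurableSet (μ := volume))).2
        (ae_of_all _ fun x hx => sub_nonneg.2 (hM x hx))),
      ENNReal.ofReal_mul (div_nonneg (sub_nonneg.2 (hM p hp)) (by positivity)),
      ENNReal.ofReal_toReal hKc.measure_lt_top.ne]
    exact ofReal_mul_volume_le_lintegral_sub_inner hK hp hM
  nlinarith

theorem inner_centroid_add_le_of_forall_inner_le (hn : 0 < n) (hK : Convex ℝ K)
    (hKc : IsCompact K) (hV : volume K ≠ 0) (hu : ‖u‖ = 1) {c : ℝ}
    (hc : ∀ x ∈ K, ⟪u, x⟫ ≤ c) :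
    ⟪u, centroid K⟫ + (volume K).toReal / ((n + 1) * (2 * diam K) ^ (n - 1)) ≤ c := by
  obtain ⟨p, hp, hpmin⟩ := hKc.exists_isMinOn (nonempty_of_measure_ne_zero hV)
    (by fun_prop : Continuous fun x => ⟪u, x⟫).continuousOn
  have hw : 0 ≤ c - ⟪u, p⟫ := sub_nonneg.2 (hc p hp)
  have hwidth : (volume K).toReal ≤ (c - ⟪u, p⟫) * (2 * diam K) ^ (n - 1) := by
    have := volume_le_of_subset_slab hn hu (a := p) (D := diam K)
      (fun x hx => dist_le_diam_of_mem hKc.isBounded hx hp) fun x hx => ⟨hpmin hx, hc x hx⟩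
    rw [← ENNReal.ofReal_pow (by positivity), ← ENNReal.ofReal_mul hw] at this
    exact ENNReal.toReal_le_of_le_ofReal (by positivity) this
  calc _ ≤ ⟪u, centroid K⟫ + (c - ⟪u, p⟫) / (n + 1) := by
        rw [mul_comm, ← div_div]
        gcongr
        exact div_le_of_le_mul₀ (by positivity) hw hwidth
    _ ≤ c := inner_centroid_add_le hK hKc hV hp hc

theorem ball_centroid_subset (hn : 0 < n) (hK : Convex ℝ K) (hKc : IsCompact K)
    (hV : volume K ≠ 0) :
    ball (centroid K) ((volume K).toReal / ((n + 1) * (2 * diam K) ^ (n - 1))) ⊆ K := by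
  intro p hp
  by_contra hpK
  obtain ⟨u, hu, c, hc, hcp⟩ := exists_unit_inner_le_lt_of_notMem hK hKc.isClosed
    (nonempty_of_measure_ne_zero hV) hpK
  have hcentroid := inner_centroid_add_le_of_forall_inner_le hn hK hKc hV hu hc
  have hp' : ⟪u, p⟫ ≤ ⟪u, centroid K⟫ + dist p (centroid K) := by
    have := real_inner_le_norm u (p - centroid K)
    rw [inner_sub_right, hu, one_mul, ← dist_eq_norm] at this
    linarith
  rw [mem_ball] at hp
  linarith

end Centroid

open Real in
theorem two_div_sqrt_pow_le_volume_unitBall {n : ℕ} (hn : 0 < n) :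
    (2 / √n) ^ n ≤ π ^ ((n : ℝ) / 2) / Gamma (n / 2 + 1) := by
  have : Nonempty (Fin n) := ⟨⟨0, hn⟩⟩
  have hn' : (0 : ℝ) < n := Nat.cast_pos.2 hn
  set a := (√n)⁻¹
  let cube : Set (Euc n) :=
    (MeasurableEquiv.toLp 2 (Fin n → ℝ)).symm ⁻¹' univ.pi fun _ => Icc (-a) a
  have hcube : cube ⊆ closedBall 0 1 := by
    intro x hx
    rw [mem_closedBall_zero_iff, EuclideanSpace.norm_eq, sqrt_le_one]
    calc ∑ i, ‖x i‖ ^ 2 ≤ ∑ _i : Fin n, a ^ 2 := by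
          gcongr with i
          exact abs_le.2 (hx i (mem_univ i))
      _ = 1 := by simp [a, inv_pow, sq_sqrt hn'.le, hn'.ne']
  have hvol := measure_mono (μ := volume) hcube
  rw [(EuclideanSpace.volume_preserving_symm_measurableEquiv_toLp _).measure_preimage
      (MeasurableSet.univ_pi fun _ => measurableSet_Icc).nullMeasurableSet,
    volume_pi_pi, EuclideanSpace.volume_closedBall] at hvol
  simp only [Real.volume_Icc, Finset.prod_const, Finset.card_univ, Fintype.card_fin,
    ENNReal.ofReal_one, one_pow, one_mul] at hvol
  have hpi : √π ^ n = π ^ ((n : ℝ) / 2) := by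
    rw [sqrt_eq_rpow, ← rpow_natCast, ← rpow_mul pi_pos.le]
    ring_nf
  rwa [sub_neg_eq_add, ← two_mul, ← ENNReal.ofReal_pow (by positivity),
    ENNReal.ofReal_le_ofReal_iff (by positivity), hpi] at hvol

theorem four_pow_mul_lt_volume_unitBall_mul {n : ℕ} (hn : 2 ≤ n) :
    4 ^ (n - 1) * ((n : ℝ) + 1) <
      Real.pi ^ ((n : ℝ) / 2) / Real.Gamma (n / 2 + 1) * (n + 2) ^ n := by
  have hn' : (0 : ℝ) < n := by positivity
  set s := √(n : ℝ)
  have hs2 : s ^ 2 = n := Real.sq_sqrt hn'.le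
  set q := ((n : ℝ) + 2) / (2 * s)
  have hq : 1 ≤ q := by
    rw [le_div_iff₀ (by positivity)]
    nlinarith [sq_nonneg (s - 1)]
  have h4q : 4 * q ^ 2 = (n + 2) ^ 2 / n := by
    rw [div_pow, mul_pow, hs2]
    field_simp
    norm_num
  calc 4 ^ (n - 1) * ((n : ℝ) + 1) < 4 ^ (n - 1) * (4 * q ^ 2) := by
        gcongr
        rw [h4q, lt_div_iff₀ hn']
        nlinarith
    _ ≤ 4 ^ (n - 1) * (4 * q ^ n) := by gcongr
    _ = (2 / s) ^ n * (n + 2) ^ n := by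
        rw [← mul_assoc, pow_sub_one_mul (by omega), ← mul_pow, ← mul_pow]
        congr 1
        simp only [q]
        field_simp
        norm_num
    _ ≤ _ := by gcongr; exact two_div_sqrt_pow_le_volume_unitBall (by omega)

/-- **Lemma 5.3: a bounded convex set of positive volume contains a ball of
explicit radius.** -/
theorem stmt16 {n : ℕ} (hn : 2 ≤ n)
    (A : Set (Euc n)) (hA : Convex ℝ A) (hAbd : IsBounded A)
    (hpos : 0 < (volume A).toReal) :
    ∃ z : Euc n, closedBall z
        ((2 : ℝ) ^ (n - 1) * (volume A).toReal /
          ((Real.pi ^ ((n : ℝ) / 2) / Real.Gamma ((n : ℝ) / 2 + 1)) *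
            ((n : ℝ) + 2) ^ n * Metric.diam A ^ (n - 1))) ⊆ A := by
  have hV : volume A ≠ 0 := (ENNReal.toReal_pos_iff.1 hpos).1.ne'
  have hvol : volume (closure A) = volume A := hA.addHaar_closure volume
  have : Nontrivial (Euc n) := Module.nontrivial_of_finrank_pos (R := ℝ) (by simp; omega)
  have hD : 0 < diam A :=
    diam_pos (not_subsingleton_iff.1 fun h => hV (h.measure_zero volume)) hAbd
  have hball := ball_centroid_subset (by omega) hA.closure hAbd.isCompact_closure (hvol ▸ hV)
  rw [hvol, diam_closure] at hball
  refine ⟨centroid (closure A), (closedBall_subset_ball ?_).trans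
    ((interior_maximal hball isOpen_ball).trans ?_)⟩
  · have h4 : (2 : ℝ) ^ (n - 1) * 2 ^ (n - 1) = 4 ^ (n - 1) := by rw [← mul_pow]; norm_num
    rw [div_lt_div_iff₀ (by positivity) (by positivity), mul_pow]
    calc _ = (volume A).toReal * diam A ^ (n - 1) * (4 ^ (n - 1) * (n + 1)) := by
          rw [← h4]; ring
      _ < (volume A).toReal * diam A ^ (n - 1) *
          (Real.pi ^ ((n : ℝ) / 2) / Real.Gamma ((n : ℝ) / 2 + 1) * (n + 2) ^ n) := by
          exact mul_lt_mul_of_pos_left (four_pow_mul_lt_volume_unitBall_mul hn) (by positivity)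
      _ = _ := by ring
  · rw [hA.interior_closure_eq_interior_of_nonempty_interior
      (hA.interior_nonempty_of_addHaar_ne_zero volume hV)]
    exact interior_subset
end
end
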